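/- arXiv:math-ph/0004020 — 7 statements merged into one kernel-verified Lean document; each statement's English description precedes it below -/
import Mathlib

section
/- Let n,k ≥ 1, let L : ℝⁿ × ℝᵏ × (ℝᵏ)ⁿ → ℝ be a smooth Lagrangian and let u : ℝⁿ → ℝᵏ be a smooth solution of the Euler–Lagrange equations Σ_α ∂/∂x^α( (∂L/∂v^i_α)(x,u(x),du(x)) ) = (∂L/∂y^i)(x,u(x),du(x)) for all i. Define S^α_β(x) := δ^α_β L(x,u(x),du(x)) − Σ_i (∂L/∂v^i_α)(x,u(x),du(x)) · (∂u^i/∂x^β)(x). Then Σ_α ∂S^α_β/∂x^α(x) = (∂L/∂x^β)(x,u(x),du(x)) for every x and β. In particular, if L does not depend on x (i.e. ∂L/∂x^β ≡ 0 for all β), then the stress–energy tensor is divergence-free: Σ_α ∂S^α_β/∂x^α = 0 for every β. -/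
open scoped BigOperators

noncomputable section

/-- The Jacobian `du` of `u : ℝⁿ → ℝᵏ` : `(jac u x) i α = ∂u^i/∂x^α (x)`. -/
def jac {n k : ℕ} (u : (Fin n → ℝ) → (Fin k → ℝ)) (x : Fin n → ℝ) :
    Fin k → Fin n → ℝ :=
  fun i α => fderiv ℝ (fun x' => u x' i) x (Pi.single α 1)

/-- `∂L/∂v^i_α` at the point `(x, y, v)`. -/
def dLdv {n k : ℕ} (L : (Fin n → ℝ) → (Fin k → ℝ) → (Fin k → Fin n → ℝ) → ℝ)
    (x : Fin n → ℝ) (y : Fin k → ℝ) (v : Fin k → Fin n → ℝ) (i : Fin k) (α : Fin n) : ℝ :=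
  fderiv ℝ (fun v' => L x y v') v (Pi.single i (Pi.single α 1))

/-- The stress–energy tensor
`S^α_β(x) = δ^α_β L(x,u(x),du(x)) − Σ_i (∂L/∂v^i_α)(x,u(x),du(x)) ∂u^i/∂x^β (x)`. -/
def stressEnergy {n k : ℕ} (L : (Fin n → ℝ) → (Fin k → ℝ) → (Fin k → Fin n → ℝ) → ℝ)
    (u : (Fin n → ℝ) → (Fin k → ℝ)) (x : Fin n → ℝ) (α β : Fin n) : ℝ :=
  (if α = β then L x (u x) (jac u x) else 0)
    - ∑ i : Fin k, dLdv L x (u x) (jac u x) i α * jac u x i β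

section Aux

variable {n k : ℕ}

/-- Abbreviation for the Lagrangian as a function on the product space. -/
private def Fl (L : (Fin n → ℝ) → (Fin k → ℝ) → (Fin k → Fin n → ℝ) → ℝ) :
    (Fin n → ℝ) × (Fin k → ℝ) × (Fin k → Fin n → ℝ) → ℝ :=
  fun p => L p.1 p.2.1 p.2.2

/-- partial derivative in the `x` slot -/
private lemma pdx (L : (Fin n → ℝ) → (Fin k → ℝ) → (Fin k → Fin n → ℝ) → ℝ)
    (x : Fin n → ℝ) (y : Fin k → ℝ) (v : Fin k → Fin n → ℝ)
    (hF : DifferentiableAt ℝ (Fl L) (x, y, v)) (h : Fin n → ℝ) :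
    fderiv ℝ (fun x' => L x' y v) x h = fderiv ℝ (Fl L) (x, y, v) (h, 0, 0) := by
  have h1 : HasFDerivAt (fun x' : Fin n → ℝ => ((x', (y, v)) :
      (Fin n → ℝ) × (Fin k → ℝ) × (Fin k → Fin n → ℝ)))
      ((ContinuousLinearMap.id ℝ (Fin n → ℝ)).prod 0) x :=
    HasFDerivAt.prodMk (hasFDerivAt_id x) (hasFDerivAt_const (y, v) x)
  have := (hF.hasFDerivAt.comp x h1).fderiv
  rw [show (fun x' => L x' y v) = (Fl L) ∘ (fun x' : Fin n → ℝ => ((x', (y, v)) :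
      (Fin n → ℝ) × (Fin k → ℝ) × (Fin k → Fin n → ℝ))) from rfl, this]
  rfl

/-- partial derivative in the `y` slot -/
private lemma pdy (L : (Fin n → ℝ) → (Fin k → ℝ) → (Fin k → Fin n → ℝ) → ℝ)
    (x : Fin n → ℝ) (y : Fin k → ℝ) (v : Fin k → Fin n → ℝ)
    (hF : DifferentiableAt ℝ (Fl L) (x, y, v)) (h : Fin k → ℝ) :
    fderiv ℝ (fun y' => L x y' v) y h = fderiv ℝ (Fl L) (x, y, v) (0, h, 0) := by
  have h1 : HasFDerivAt (fun y' : Fin k → ℝ => ((x, (y', v)) :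
      (Fin n → ℝ) × (Fin k → ℝ) × (Fin k → Fin n → ℝ)))
      ((0 : (Fin k → ℝ) →L[ℝ] (Fin n → ℝ)).prod
        ((ContinuousLinearMap.id ℝ (Fin k → ℝ)).prod 0)) y :=
    HasFDerivAt.prodMk (hasFDerivAt_const x y) (HasFDerivAt.prodMk (hasFDerivAt_id y) (hasFDerivAt_const v y))
  have := (hF.hasFDerivAt.comp y h1).fderiv
  rw [show (fun y' => L x y' v) = (Fl L) ∘ (fun y' : Fin k → ℝ => ((x, (y', v)) :
      (Fin n → ℝ) × (Fin k → ℝ) × (Fin k → Fin n → ℝ))) from rfl, this]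
  rfl

/-- partial derivative in the `v` slot -/
private lemma pdv (L : (Fin n → ℝ) → (Fin k → ℝ) → (Fin k → Fin n → ℝ) → ℝ)
    (x : Fin n → ℝ) (y : Fin k → ℝ) (v : Fin k → Fin n → ℝ)
    (hF : DifferentiableAt ℝ (Fl L) (x, y, v)) (h : Fin k → Fin n → ℝ) :
    fderiv ℝ (fun v' => L x y v') v h = fderiv ℝ (Fl L) (x, y, v) (0, 0, h) := by
  have h1 : HasFDerivAt (fun v' : Fin k → Fin n → ℝ => ((x, (y, v')) :
      (Fin n → ℝ) × (Fin k → ℝ) × (Fin k → Fin n → ℝ)))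
      ((0 : (Fin k → Fin n → ℝ) →L[ℝ] (Fin n → ℝ)).prod
        ((0 : (Fin k → Fin n → ℝ) →L[ℝ] (Fin k → ℝ)).prod
          (ContinuousLinearMap.id ℝ (Fin k → Fin n → ℝ)))) v :=
    HasFDerivAt.prodMk (hasFDerivAt_const x v) (HasFDerivAt.prodMk (hasFDerivAt_const y v) (hasFDerivAt_id v))
  have := (hF.hasFDerivAt.comp v h1).fderiv
  rw [show (fun v' => L x y v') = (Fl L) ∘ (fun v' : Fin k → Fin n → ℝ => ((x, (y, v')) :
      (Fin n → ℝ) × (Fin k → ℝ) × (Fin k → Fin n → ℝ))) from rfl, this]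
  rfl

private lemma jac_contDiff (u : (Fin n → ℝ) → (Fin k → ℝ)) (hu : ContDiff ℝ (⊤ : ℕ∞) u) :
    ContDiff ℝ (⊤ : ℕ∞) (jac u) := by
  apply contDiff_pi.2; intro i; apply contDiff_pi.2; intro α
  have hui : ContDiff ℝ (⊤ : ℕ∞) (fun x' => u x' i) :=
    (ContinuousLinearMap.proj (R := ℝ) (φ := fun _ : Fin k => ℝ) i).contDiff.comp hu
  exact (ContinuousLinearMap.apply ℝ ℝ (Pi.single α 1 : Fin n → ℝ)).contDiff.comp
    (hui.fderiv_right (by simp))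

/-- components of the derivative of a map into a pi type -/
private lemma fderiv_apply_comp {ι : Type*} [Fintype ι]
    {E : Type*} [NormedAddCommGroup E] [NormedSpace ℝ E]
    (f : (Fin n → ℝ) → ι → E) (x : Fin n → ℝ) (hf : DifferentiableAt ℝ f x)
    (i : ι) (w : Fin n → ℝ) :
    fderiv ℝ f x w i = fderiv ℝ (fun x' => f x' i) x w := by
  have := ((ContinuousLinearMap.proj (R := ℝ) (φ := fun _ : ι => E) i).hasFDerivAt.comp x
    hf.hasFDerivAt).fderiv
  rw [show (fun x' => f x' i)
    = (ContinuousLinearMap.proj (R := ℝ) (φ := fun _ : ι => E) i) ∘ f from rfl, this]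
  rfl

/-- symmetry of second derivatives -/
private lemma second_symm (f : (Fin n → ℝ) → ℝ) (hf : ContDiff ℝ (⊤ : ℕ∞) f) (x : Fin n → ℝ)
    (β γ : Fin n) :
    fderiv ℝ (fun x' => fderiv ℝ f x' (Pi.single γ 1)) x (Pi.single β 1)
      = fderiv ℝ (fun x' => fderiv ℝ f x' (Pi.single β 1)) x (Pi.single γ 1) := by
  have hdf : DifferentiableAt ℝ (fderiv ℝ f) x :=
    ((hf.fderiv_right (m := (⊤ : ℕ∞)) (by simp)).differentiable (by simp)) x
  have key : ∀ w v : Fin n → ℝ, fderiv ℝ (fun x' => fderiv ℝ f x' w) x v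
      = fderiv ℝ (fderiv ℝ f) x v w := by
    intro w v
    have := ((ContinuousLinearMap.apply ℝ ℝ w).hasFDerivAt.comp x hdf.hasFDerivAt).fderiv
    rw [show (fun x' => fderiv ℝ f x' w)
      = (ContinuousLinearMap.apply ℝ ℝ w) ∘ (fderiv ℝ f) from rfl, this]
    rfl
  rw [key, key]
  exact second_derivative_symmetric
    (fun y => ((hf.differentiable (by simp)) y).hasFDerivAt) hdf.hasFDerivAt _ _

end Aux

/-- If `u` is a smooth solution of the Euler–Lagrange equations,
then `Σ_α ∂S^α_β/∂x^α = ∂L/∂x^β`; in particular if `L` does not depend on `x`,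
the stress–energy tensor is divergence free. -/
theorem stmt1 (n k : ℕ) (hn : 1 ≤ n) (hk : 1 ≤ k)
    (L : (Fin n → ℝ) → (Fin k → ℝ) → (Fin k → Fin n → ℝ) → ℝ)
    (hL : ContDiff ℝ (⊤ : ℕ∞) fun p : (Fin n → ℝ) × (Fin k → ℝ) × (Fin k → Fin n → ℝ) =>
      L p.1 p.2.1 p.2.2)
    (u : (Fin n → ℝ) → (Fin k → ℝ)) (hu : ContDiff ℝ (⊤ : ℕ∞) u)
    (hEL : ∀ (x : Fin n → ℝ) (i : Fin k),
      ∑ α : Fin n, fderiv ℝ (fun x' => dLdv L x' (u x') (jac u x') i α) x (Pi.single α 1)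
        = fderiv ℝ (fun y => L x y (jac u x)) (u x) (Pi.single i 1)) :
    (∀ (x : Fin n → ℝ) (β : Fin n),
      ∑ α : Fin n, fderiv ℝ (fun x' => stressEnergy L u x' α β) x (Pi.single α 1)
        = fderiv ℝ (fun x' => L x' (u x) (jac u x)) x (Pi.single β 1)) ∧
    ((∀ (x : Fin n → ℝ) (y : Fin k → ℝ) (v : Fin k → Fin n → ℝ) (β : Fin n),
        fderiv ℝ (fun x' => L x' y v) x (Pi.single β 1) = 0) →
      ∀ (x : Fin n → ℝ) (β : Fin n),
        ∑ α : Fin n, fderiv ℝ (fun x' => stressEnergy L u x' α β) x (Pi.single α 1) = 0) := by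
  -- basic smoothness facts
  have hFl : ContDiff ℝ (⊤ : ℕ∞) (Fl L) := hL
  have hjac : ContDiff ℝ (⊤ : ℕ∞) (jac u) := jac_contDiff u hu
  have hΓ : ContDiff ℝ (⊤ : ℕ∞) (fun x' : Fin n → ℝ => ((x', (u x', jac u x')) :
      (Fin n → ℝ) × (Fin k → ℝ) × (Fin k → Fin n → ℝ))) :=
    contDiff_id.prodMk (hu.prodMk hjac)
  have hg : ContDiff ℝ (⊤ : ℕ∞) (fun x' => L x' (u x') (jac u x')) := hFl.comp hΓ
  -- dLdv along the solution equals a smooth composition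
  have hdLdv_eq : ∀ (x' : Fin n → ℝ) (i : Fin k) (α : Fin n),
      dLdv L x' (u x') (jac u x') i α
        = fderiv ℝ (Fl L) (x', u x', jac u x') (0, 0, Pi.single i (Pi.single α 1)) := by
    intro x' i α
    exact pdv L x' (u x') (jac u x') ((hFl.differentiable (by simp)) _) _
  have hdLdv_cd : ∀ (i : Fin k) (α : Fin n),
      ContDiff ℝ (⊤ : ℕ∞) (fun x' => dLdv L x' (u x') (jac u x') i α) := by
    intro i α
    have : ContDiff ℝ (⊤ : ℕ∞) ((fun q : ((Fin n → ℝ) × (Fin k → ℝ) × (Fin k → Fin n → ℝ)) →L[ℝ] ℝ =>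
        (ContinuousLinearMap.apply ℝ ℝ ((0, 0, Pi.single i (Pi.single α 1)) :
          (Fin n → ℝ) × (Fin k → ℝ) × (Fin k → Fin n → ℝ))) q)
        ∘ (fderiv ℝ (Fl L))
        ∘ (fun x' : Fin n → ℝ => (x', u x', jac u x'))) :=
      (ContinuousLinearMap.apply ℝ ℝ _).contDiff.comp
        ((hFl.fderiv_right (by simp)).comp hΓ)
    have heq : (fun x' => dLdv L x' (u x') (jac u x') i α)
        = fun x' : Fin n → ℝ =>
        (ContinuousLinearMap.apply ℝ ℝ ((0, 0, Pi.single i (Pi.single α 1)) :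
          (Fin n → ℝ) × (Fin k → ℝ) × (Fin k → Fin n → ℝ)))
          (fderiv ℝ (Fl L) (x', u x', jac u x')) := by
      funext x'; exact hdLdv_eq x' i α
    rw [heq]; exact this
  have hjcomp : ∀ (i : Fin k) (β : Fin n), ContDiff ℝ (⊤ : ℕ∞) (fun x' => jac u x' i β) := by
    intro i β
    exact (ContinuousLinearMap.proj (R := ℝ) (φ := fun _ : Fin n => ℝ) β).contDiff.comp
      ((ContinuousLinearMap.proj (R := ℝ) (φ := fun _ : Fin k => Fin n → ℝ) i).contDiff.comp hjac)
  -- the per-term derivative of the stress-energy tensor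
  have hterm : ∀ (x : Fin n → ℝ) (α β : Fin n) (w : Fin n → ℝ),
      fderiv ℝ (fun x' => stressEnergy L u x' α β) x w
        = (if α = β then fderiv ℝ (fun x' => L x' (u x') (jac u x')) x w else 0)
          - ∑ i : Fin k,
            (dLdv L x (u x) (jac u x) i α * fderiv ℝ (fun x' => jac u x' i β) x w
              + jac u x i β * fderiv ℝ (fun x' => dLdv L x' (u x') (jac u x') i α) x w) := by
    intro x α β w
    have hite : DifferentiableAt ℝ
        (fun x' => if α = β then L x' (u x') (jac u x') else 0) x := by
      rcases eq_or_ne α β with h | h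
      · simp only [if_pos h]; exact (hg.differentiable (by simp)) x
      · simp only [if_neg h]; exact differentiableAt_const 0
    have hprod : ∀ i : Fin k, DifferentiableAt ℝ
        (fun x' => dLdv L x' (u x') (jac u x') i α * jac u x' i β) x := fun i =>
      (((hdLdv_cd i α).differentiable (by simp)) x).mul (((hjcomp i β).differentiable (by simp)) x)
    have hsum : DifferentiableAt ℝ
        (fun x' => ∑ i : Fin k, dLdv L x' (u x') (jac u x') i α * jac u x' i β) x :=
      DifferentiableAt.fun_sum (fun i _ => hprod i)
    have e1 : (fun x' => stressEnergy L u x' α β)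
        = fun x' => (if α = β then L x' (u x') (jac u x') else 0)
          - ∑ i : Fin k, dLdv L x' (u x') (jac u x') i α * jac u x' i β := rfl
    rw [e1, fderiv_fun_sub hite hsum]
    simp only [ContinuousLinearMap.coe_sub', Pi.sub_apply]
    congr 1
    · rcases eq_or_ne α β with h | h
      · simp only [if_pos h]
      · simp only [if_neg h, fderiv_const_apply]; rfl
    · rw [fderiv_fun_sum (fun i _ => hprod i)]
      simp only [ContinuousLinearMap.coe_sum', Finset.sum_apply]
      refine Finset.sum_congr rfl (fun i _ => ?_)
      rw [fderiv_fun_mul (((hdLdv_cd i α).differentiable (by simp)) x)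
        (((hjcomp i β).differentiable (by simp)) x)]
      simp only [ContinuousLinearMap.add_apply, ContinuousLinearMap.coe_smul',
        Pi.smul_apply, smul_eq_mul]
  -- main computation
  have main : ∀ (x : Fin n → ℝ) (β : Fin n),
      ∑ α : Fin n, fderiv ℝ (fun x' => stressEnergy L u x' α β) x (Pi.single α 1)
        = fderiv ℝ (fun x' => L x' (u x) (jac u x)) x (Pi.single β 1) := by
    intro x β
    set P := fderiv ℝ (Fl L) (x, u x, jac u x) with hP
    have hdF : DifferentiableAt ℝ (Fl L) (x, u x, jac u x) := (hFl.differentiable (by simp)) _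
    -- expansion of the total derivative of g
    have hchain : fderiv ℝ (fun x' => L x' (u x') (jac u x')) x (Pi.single β 1)
        = P (Pi.single β 1, fderiv ℝ u x (Pi.single β 1),
            fderiv ℝ (jac u) x (Pi.single β 1)) := by
      have h1 : HasFDerivAt (fun x' : Fin n → ℝ => ((x', (u x', jac u x')) :
          (Fin n → ℝ) × (Fin k → ℝ) × (Fin k → Fin n → ℝ)))
          ((ContinuousLinearMap.id ℝ (Fin n → ℝ)).prod
            ((fderiv ℝ u x).prod (fderiv ℝ (jac u) x))) x :=
        HasFDerivAt.prodMk (hasFDerivAt_id x) (HasFDerivAt.prodMk ((hu.differentiable (by simp)) x).hasFDerivAt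
          ((hjac.differentiable (by simp) x).hasFDerivAt))
      have := (hdF.hasFDerivAt.comp x h1).fderiv
      rw [show (fun x' => L x' (u x') (jac u x'))
        = (Fl L) ∘ (fun x' : Fin n → ℝ => ((x', (u x', jac u x')) :
          (Fin n → ℝ) × (Fin k → ℝ) × (Fin k → Fin n → ℝ))) from rfl, this]
      rfl
    -- splitting
    have hsplit : ∀ (a : Fin n → ℝ) (b : Fin k → ℝ) (c : Fin k → Fin n → ℝ),
        P (a, b, c) = P (a, 0, 0) + P (0, b, 0) + P (0, 0, c) := by
      intro a b c
      rw [← map_add, ← map_add]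
      congr 1
      simp [Prod.ext_iff]
    have hbasisY : ∀ b : Fin k → ℝ,
        P (0, b, 0) = ∑ i : Fin k, b i * P (0, Pi.single i 1, 0) := by
      intro b
      have hb : b = ∑ i : Fin k, b i • (Pi.single i 1 : Fin k → ℝ) := by
        funext j
        simp [Pi.single_apply, Finset.sum_apply, mul_ite, Finset.sum_ite_eq]
      set e2 : (Fin k → ℝ) →L[ℝ] ((Fin n → ℝ) × (Fin k → ℝ) × (Fin k → Fin n → ℝ)) :=
        (0 : (Fin k → ℝ) →L[ℝ] (Fin n → ℝ)).prod
          ((ContinuousLinearMap.id ℝ (Fin k → ℝ)).prod 0) with he2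
      have he : ∀ b' : Fin k → ℝ, P (0, b', 0) = (P.comp e2) b' := fun _ => rfl
      conv_lhs => rw [he b, hb]
      rw [map_sum]
      exact Finset.sum_congr rfl fun i _ => by rw [map_smul, smul_eq_mul, ← he]
    have hbasisV : ∀ c : Fin k → Fin n → ℝ,
        P (0, 0, c) = ∑ i : Fin k, ∑ γ : Fin n,
          c i γ * P (0, 0, Pi.single i (Pi.single γ 1)) := by
      intro c
      have hc : c = ∑ i : Fin k, ∑ γ : Fin n,
          c i γ • (Pi.single i (Pi.single γ 1) : Fin k → Fin n → ℝ) := by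
        funext j δ
        simp [Pi.single_apply, Finset.sum_apply, mul_ite, Finset.sum_ite_eq,
          apply_ite (fun f : Fin n → ℝ => f δ)]
      set e3 : (Fin k → Fin n → ℝ) →L[ℝ] ((Fin n → ℝ) × (Fin k → ℝ) × (Fin k → Fin n → ℝ)) :=
        (0 : (Fin k → Fin n → ℝ) →L[ℝ] (Fin n → ℝ)).prod
          ((0 : (Fin k → Fin n → ℝ) →L[ℝ] (Fin k → ℝ)).prod
            (ContinuousLinearMap.id ℝ (Fin k → Fin n → ℝ))) with he3
      have he : ∀ c' : Fin k → Fin n → ℝ, P (0, 0, c') = (P.comp e3) c' := fun _ => rfl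
      conv_lhs => rw [he c, hc]
      rw [map_sum]
      refine Finset.sum_congr rfl fun i _ => ?_
      rw [map_sum]
      exact Finset.sum_congr rfl fun γ _ => by rw [map_smul, smul_eq_mul, ← he]
    -- components
    have hbu : ∀ i : Fin k, fderiv ℝ u x (Pi.single β 1) i = jac u x i β := by
      intro i
      exact fderiv_apply_comp u x ((hu.differentiable (by simp)) x) i _
    have hcJ : ∀ (i : Fin k) (γ : Fin n), fderiv ℝ (jac u) x (Pi.single β 1) i γ
        = fderiv ℝ (fun x' => jac u x' i γ) x (Pi.single β 1) := by
      intro i γ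
      rw [fderiv_apply_comp (jac u) x ((hjac.differentiable (by simp)) x) i]
      exact fderiv_apply_comp (fun x' => jac u x' i) x
        (((ContinuousLinearMap.proj (R := ℝ) (φ := fun _ : Fin k => Fin n → ℝ) i).contDiff.comp
          hjac).differentiable (by simp) x) γ _
    -- symmetry of second derivatives of u
    have hsymm : ∀ (i : Fin k) (γ : Fin n),
        fderiv ℝ (fun x' => jac u x' i γ) x (Pi.single β 1)
          = fderiv ℝ (fun x' => jac u x' i β) x (Pi.single γ 1) := by
      intro i γ
      have hui : ContDiff ℝ (⊤ : ℕ∞) (fun x' => u x' i) :=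
        (ContinuousLinearMap.proj (R := ℝ) (φ := fun _ : Fin k => ℝ) i).contDiff.comp hu
      exact second_symm (fun x' => u x' i) hui x β γ
    -- identify the three partial-derivative blocks
    have hPx : P (Pi.single β 1, 0, 0)
        = fderiv ℝ (fun x' => L x' (u x) (jac u x)) x (Pi.single β 1) :=
      (pdx L x (u x) (jac u x) hdF (Pi.single β 1)).symm
    have hPy : ∀ i : Fin k, P (0, Pi.single i 1, 0)
        = fderiv ℝ (fun y => L x y (jac u x)) (u x) (Pi.single i 1) :=
      fun i => (pdy L x (u x) (jac u x) hdF (Pi.single i 1)).symm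
    have hPv : ∀ (i : Fin k) (γ : Fin n), P (0, 0, Pi.single i (Pi.single γ 1))
        = dLdv L x (u x) (jac u x) i γ :=
      fun i γ => (pdv L x (u x) (jac u x) hdF (Pi.single i (Pi.single γ 1))).symm
    -- the ite sum
    have hIte : ∑ α : Fin n,
        (if α = β then fderiv ℝ (fun x' => L x' (u x') (jac u x')) x (Pi.single α 1) else 0)
          = fderiv ℝ (fun x' => L x' (u x') (jac u x')) x (Pi.single β 1) := by
      rw [Finset.sum_ite_eq' Finset.univ β
        (fun α => fderiv ℝ (fun x' => L x' (u x') (jac u x')) x (Pi.single α 1))]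
      simp
    -- expansion of the total derivative of g
    have hgexp : fderiv ℝ (fun x' => L x' (u x') (jac u x')) x (Pi.single β 1)
        = fderiv ℝ (fun x' => L x' (u x) (jac u x)) x (Pi.single β 1)
          + ∑ i : Fin k, jac u x i β
              * fderiv ℝ (fun y => L x y (jac u x)) (u x) (Pi.single i 1)
          + ∑ i : Fin k, ∑ γ : Fin n,
              fderiv ℝ (fun x' => jac u x' i β) x (Pi.single γ 1)
                * dLdv L x (u x) (jac u x) i γ := by
      rw [hchain, hsplit, hbasisY, hbasisV, hPx]
      congr 1
      · congr 1
        exact Finset.sum_congr rfl fun i _ => by rw [hbu i, hPy i]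
      · exact Finset.sum_congr rfl fun i _ => Finset.sum_congr rfl fun γ _ => by
          rw [hPv i γ, hcJ i γ, hsymm i γ]
    -- the subtracted double sum
    have hsub : ∑ α : Fin n, ∑ i : Fin k,
        (dLdv L x (u x) (jac u x) i α
            * fderiv ℝ (fun x' => jac u x' i β) x (Pi.single α 1)
          + jac u x i β
            * fderiv ℝ (fun x' => dLdv L x' (u x') (jac u x') i α) x (Pi.single α 1))
        = (∑ i : Fin k, ∑ γ : Fin n,
            fderiv ℝ (fun x' => jac u x' i β) x (Pi.single γ 1)
              * dLdv L x (u x) (jac u x) i γ)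
          + ∑ i : Fin k, jac u x i β
              * fderiv ℝ (fun y => L x y (jac u x)) (u x) (Pi.single i 1) := by
      rw [Finset.sum_comm]
      have h1 : ∀ i : Fin k, ∑ α : Fin n,
          (dLdv L x (u x) (jac u x) i α
              * fderiv ℝ (fun x' => jac u x' i β) x (Pi.single α 1)
            + jac u x i β
              * fderiv ℝ (fun x' => dLdv L x' (u x') (jac u x') i α) x (Pi.single α 1))
          = (∑ γ : Fin n, fderiv ℝ (fun x' => jac u x' i β) x (Pi.single γ 1)
              * dLdv L x (u x) (jac u x) i γ)
            + jac u x i β * fderiv ℝ (fun y => L x y (jac u x)) (u x) (Pi.single i 1) := by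
        intro i
        rw [Finset.sum_add_distrib, ← Finset.mul_sum, hEL x i]
        congr 1
        exact Finset.sum_congr rfl fun γ _ => mul_comm _ _
      rw [Finset.sum_congr rfl fun i _ => h1 i, Finset.sum_add_distrib]
    -- put everything together
    rw [Finset.sum_congr rfl (fun α _ => hterm x α β (Pi.single α 1))]
    rw [Finset.sum_sub_distrib, hIte, hgexp, hsub]
    ring
  exact ⟨main, fun hzero x β => by rw [main x β, hzero x (u x) (jac u x) β]⟩

end
end

section
/- Under the generalized Legendre condition, the Hamiltonian H(q,p) := ⟨p, V(q,p)⟩ − L(q, V(q,p)) is smooth on O and its partial derivatives are: ∂H/∂q^μ(q,p) = − (∂L/∂q^μ)(q, V(q,p)) for every μ = 1,…,n+k, and ∂H/∂p_{μ₁…μₙ}(q,p) = Z^{μ₁…μₙ}_{1…n}(q,p) for every μ₁ < … < μₙ, where Z^{μ₁…μₙ}_{1…n}(q,p) is the n×n determinant det( Z^{μ_a}_b(q,p) )_{1≤a,b≤n} formed from the vectors Z_β(q,p) := ∂/∂x^β + Σ_i V^i_β(q,p) ∂/∂y^i. -/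
open scoped BigOperators

noncomputable section

/-- Increasing multi-indices `μ₁ < … < μₙ` in `{1,…,N}`, encoded as `n`-element subsets. -/
abbrev MultiIdx (N n : ℕ) : Type := {s : Finset (Fin N) // s.card = n}

/-- `μ_a` : the `a`-th element (in increasing order) of the multi-index `s`. -/
def midx {N n : ℕ} (s : MultiIdx N n) (a : Fin n) : Fin N :=
  ((s.1.orderIsoOfFin s.2) a : Fin N)

/-- The multimomentum phase space `M = ℝ^{n+k} × Λⁿ(ℝ^{n+k})*`, a point being `(q,p)` with
`p` given by its coordinates `p_{μ₁…μₙ}` on increasing multi-indices. -/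
abbrev Phase (n k : ℕ) : Type := (Fin (n + k) → ℝ) × (MultiIdx (n + k) n → ℝ)

/-- The column vectors `z_β = ∂/∂x^β + Σ_i v^i_β ∂/∂y^i ∈ ℝ^{n+k}`. -/
def zcol (n k : ℕ) (v : Fin k → Fin n → ℝ) : Fin n → (Fin (n + k) → ℝ) :=
  fun β => Fin.append (Pi.single β 1) (fun i => v i β)

/-- `⟨p, z₁ ∧ … ∧ zₙ⟩ = Σ_{μ₁<…<μₙ} p_{μ₁…μₙ} det (z^{μ_a}_b)` for arbitrary columns `z`. -/
def pairing (n k : ℕ) (p : MultiIdx (n + k) n → ℝ) (z : Fin n → (Fin (n + k) → ℝ)) : ℝ :=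
  ∑ s : MultiIdx (n + k) n, p s * Matrix.det (Matrix.of fun a b : Fin n => z b (midx s a))

/-- `W(q,v,p) = ⟨p,v⟩ − L(q,v)`. -/
def Wfun (n k : ℕ) (L : (Fin (n + k) → ℝ) → (Fin k → Fin n → ℝ) → ℝ)
    (q : Fin (n + k) → ℝ) (v : Fin k → Fin n → ℝ) (p : MultiIdx (n + k) n → ℝ) : ℝ :=
  pairing n k p (zcol n k v) - L q v


-- aux lemmas
lemma zcol_entry_contDiff (n k : ℕ) (b : Fin n) (μ : Fin (n + k)) :
    ContDiff ℝ (⊤ : ℕ∞) (fun v : Fin k → Fin n → ℝ => zcol n k v b μ) := by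
  induction μ using Fin.addCases with
  | left i => simp only [zcol, Fin.append_left]; exact contDiff_const
  | right i =>
      simp only [zcol, Fin.append_right]
      exact (contDiff_apply ℝ ℝ b).comp (contDiff_apply ℝ (Fin n → ℝ) i)

lemma pairing_contDiff (n k : ℕ) :
    ContDiff ℝ (⊤ : ℕ∞) (fun x : Phase n k × (Fin k → Fin n → ℝ) =>
      pairing n k x.1.2 (zcol n k x.2)) := by
  unfold pairing
  have hdet : ∀ s : MultiIdx (n + k) n, ContDiff ℝ (⊤ : ℕ∞)
      (fun x : Phase n k × (Fin k → Fin n → ℝ) =>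
        Matrix.det (Matrix.of fun a b : Fin n => zcol n k x.2 b (midx s a))) := by
    intro s
    simp only [Matrix.det_apply']
    have hterm : ∀ σ : Equiv.Perm (Fin n), ContDiff ℝ (⊤ : ℕ∞)
        (fun x : Phase n k × (Fin k → Fin n → ℝ) =>
          ((Equiv.Perm.sign σ : ℤ) : ℝ) *
            ∏ a : Fin n, Matrix.of (fun a b : Fin n => zcol n k x.2 b (midx s a)) (σ a) a) := by
      intro σ
      refine ContDiff.mul contDiff_const ?_
      refine contDiff_iff_contDiffAt.mpr fun x => ?_
      refine contDiffAt_prod fun a _ => ?_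
      exact ((zcol_entry_contDiff n k a (midx s (σ a))).comp contDiff_snd).contDiffAt
    exact ContDiff.sum fun σ _ => hterm σ
  have hterm : ∀ s : MultiIdx (n + k) n, ContDiff ℝ (⊤ : ℕ∞)
      (fun x : Phase n k × (Fin k → Fin n → ℝ) =>
        x.1.2 s * Matrix.det (Matrix.of fun a b : Fin n => zcol n k x.2 b (midx s a))) := by
    intro s
    refine ContDiff.mul ?_ (hdet s)
    exact (contDiff_apply ℝ ℝ s).comp (contDiff_snd.comp contDiff_fst)
  exact ContDiff.sum fun s _ => hterm s

def pairCLM (n k : ℕ) (z : Fin n → (Fin (n + k) → ℝ)) : (MultiIdx (n + k) n → ℝ) →L[ℝ] ℝ :=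
  ∑ s, Matrix.det (Matrix.of fun a b : Fin n => z b (midx s a)) • ContinuousLinearMap.proj s

lemma pairCLM_apply (n k : ℕ) (z : Fin n → (Fin (n + k) → ℝ)) (p : MultiIdx (n + k) n → ℝ) :
    pairCLM n k z p = pairing n k p z := by
  simp [pairCLM, pairing, ContinuousLinearMap.sum_apply, mul_comm]

lemma pairCLM_single (n k : ℕ) (z : Fin n → (Fin (n + k) → ℝ)) (s : MultiIdx (n + k) n) :
    pairCLM n k z (Pi.single s 1) =
      Matrix.det (Matrix.of fun a b : Fin n => z b (midx s a)) := by
  rw [pairCLM_apply]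
  simp [pairing, Pi.single_apply]

lemma sum_single_repr (n k : ℕ) (dv : Fin k → Fin n → ℝ) :
    dv = ∑ i, ∑ α, dv i α • (Pi.single i (Pi.single α 1) : Fin k → Fin n → ℝ) := by
  funext j β
  simp [Pi.single_apply, Finset.sum_apply, ite_apply, smul_eq_mul, mul_ite, Finset.sum_ite_eq, Finset.sum_ite_eq']


set_option maxHeartbeats 2000000 in
/-- Under the generalized Legendre condition, the Hamiltonian
`H(q,p) = ⟨p, V(q,p)⟩ − L(q, V(q,p))` is smooth on `O`, with
`∂H/∂q^μ = −∂L/∂q^μ(q,V(q,p))` and `∂H/∂p_{μ₁…μₙ} = Z^{μ₁…μₙ}_{1…n}(q,p)`, the latter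
being the determinant formed from the vectors `Z_β(q,p) = ∂/∂x^β + Σ_i V^i_β(q,p) ∂/∂y^i`. -/
theorem stmt2 (n k : ℕ) (hn : 1 ≤ n) (hk : 1 ≤ k)
    (L : (Fin (n + k) → ℝ) → (Fin k → Fin n → ℝ) → ℝ)
    (hL : ContDiff ℝ (⊤ : ℕ∞) fun qv : (Fin (n + k) → ℝ) × (Fin k → Fin n → ℝ) => L qv.1 qv.2)
    -- generalized Legendre condition
    (O : Set (Phase n k)) (hO : IsOpen O) (hOne : O.Nonempty)
    (V : Phase n k → (Fin k → Fin n → ℝ)) (hV : ContDiffOn ℝ (⊤ : ℕ∞) V O)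
    (hcrit : ∀ m ∈ O, ∀ (i : Fin k) (α : Fin n),
      fderiv ℝ (fun v => Wfun n k L m.1 v m.2) (V m) (Pi.single i (Pi.single α 1)) = 0)
    (huniq : ∀ m ∈ O, ∀ v : Fin k → Fin n → ℝ,
      (∀ (i : Fin k) (α : Fin n),
        fderiv ℝ (fun v' => Wfun n k L m.1 v' m.2) v (Pi.single i (Pi.single α 1)) = 0) →
      v = V m)
    -- the Hamiltonian
    (H : Phase n k → ℝ) (hH : ∀ m, H m = Wfun n k L m.1 (V m) m.2) :
    ContDiffOn ℝ (⊤ : ℕ∞) H O ∧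
    (∀ m ∈ O, ∀ μ : Fin (n + k),
      fderiv ℝ H m ((Pi.single μ 1 : Fin (n + k) → ℝ), (0 : MultiIdx (n + k) n → ℝ))
        = - fderiv ℝ (fun q => L q (V m)) m.1 (Pi.single μ 1)) ∧
    (∀ m ∈ O, ∀ s : MultiIdx (n + k) n,
      fderiv ℝ H m ((0 : Fin (n + k) → ℝ), (Pi.single s 1 : MultiIdx (n + k) n → ℝ))
        = Matrix.det (Matrix.of fun a b : Fin n => zcol n k (V m) b (midx s a))) := by
  have hHe : H = fun m' : Phase n k => Wfun n k L m'.1 (V m') m'.2 := funext hH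
  subst hHe
  -- the joint function G
  set G : Phase n k × (Fin k → Fin n → ℝ) → ℝ :=
    fun x => Wfun n k L x.1.1 x.2 x.1.2 with hGdef
  have hGsm : ContDiff ℝ (⊤ : ℕ∞) G := by
    have h2 : ContDiff ℝ (⊤ : ℕ∞) (fun x : Phase n k × (Fin k → Fin n → ℝ) => L x.1.1 x.2) :=
      hL.comp ((contDiff_fst.comp contDiff_fst).prodMk contDiff_snd)
    exact (pairing_contDiff n k).sub h2
  have hGd : Differentiable ℝ G := hGsm.differentiable (by simp)
  -- smoothness of H
  have hsmooth : ContDiffOn ℝ (⊤ : ℕ∞) (fun m' : Phase n k => Wfun n k L m'.1 (V m') m'.2) O := by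
    have : ContDiffOn ℝ (⊤ : ℕ∞) (fun m' : Phase n k => G (m', V m')) O :=
      hGsm.comp_contDiffOn (contDiffOn_id.prodMk hV)
    exact this
  -- key derivative computation
  have hkey : ∀ m ∈ O,
      HasFDerivAt (fun m' : Phase n k => Wfun n k L m'.1 (V m') m'.2)
        ((pairCLM n k (zcol n k (V m))).comp (ContinuousLinearMap.snd ℝ _ _) -
          (fderiv ℝ (fun q => L q (V m)) m.1).comp (ContinuousLinearMap.fst ℝ _ _)) m := by
    intro m hm
    set v₀ := V m with hv₀
    set ℓ := pairCLM n k (zcol n k v₀) with hℓ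
    set DL := fderiv ℝ (fun q => L q v₀) m.1 with hDL
    have hVd : HasFDerivAt V (fderiv ℝ V m) m :=
      ((hV.contDiffAt (hO.mem_nhds hm)).differentiableAt (by simp)).hasFDerivAt
    have hHd : HasFDerivAt (fun m' : Phase n k => Wfun n k L m'.1 (V m') m'.2)
        ((fderiv ℝ G (m, v₀)).comp
          ((ContinuousLinearMap.id ℝ (Phase n k)).prod (fderiv ℝ V m))) m :=
      by have := (hGd (m, v₀)).hasFDerivAt.comp m ((hasFDerivAt_id m).prodMk hVd); exact this
    -- partial derivative in v vanishes
    have hpart : HasFDerivAt (fun v => Wfun n k L m.1 v m.2)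
        ((fderiv ℝ G (m, v₀)).comp (ContinuousLinearMap.inr ℝ (Phase n k) _)) v₀ :=
      (hGd (m, v₀)).hasFDerivAt.comp v₀ (hasFDerivAt_prodMk_right m v₀)
    have h0 : ∀ (i : Fin k) (α : Fin n),
        ((fderiv ℝ G (m, v₀)).comp (ContinuousLinearMap.inr ℝ (Phase n k) _))
          (Pi.single i (Pi.single α 1)) = 0 := by
      intro i α; rw [← hpart.fderiv]; exact hcrit m hm i α
    have hinr : ∀ dv : Fin k → Fin n → ℝ, fderiv ℝ G (m, v₀) ((0 : Phase n k), dv) = 0 := by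
      intro dv
      have : ((fderiv ℝ G (m, v₀)).comp (ContinuousLinearMap.inr ℝ (Phase n k) _)) dv = 0 := by
        conv_lhs => rw [sum_single_repr n k dv]
        rw [map_sum]
        refine Finset.sum_eq_zero fun i _ => ?_
        rw [map_sum]
        refine Finset.sum_eq_zero fun α _ => ?_
        rw [map_smul, h0 i α, smul_zero]
      simpa using this
    -- partial derivative in m
    have h1 : HasFDerivAt (fun m' : Phase n k => pairing n k m'.2 (zcol n k v₀))
        (ℓ.comp (ContinuousLinearMap.snd ℝ _ _)) m := by
      have he : (fun m' : Phase n k => pairing n k m'.2 (zcol n k v₀))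
          = fun m' : Phase n k => ℓ m'.2 := by
        funext m'; rw [hℓ, pairCLM_apply]
      rw [he]
      exact ℓ.hasFDerivAt.comp m hasFDerivAt_snd
    have hLq : HasFDerivAt (fun q => L q v₀) DL m.1 := by
      have hc : ContDiff ℝ (⊤ : ℕ∞) (fun q => L q v₀) := hL.comp (contDiff_id.prodMk contDiff_const)
      exact (hc.differentiable (by simp) m.1).hasFDerivAt
    have h2 : HasFDerivAt (fun m' : Phase n k => L m'.1 v₀)
        (DL.comp (ContinuousLinearMap.fst ℝ _ _)) m := hLq.comp m hasFDerivAt_fst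
    have hWm : HasFDerivAt (fun m' : Phase n k => Wfun n k L m'.1 v₀ m'.2)
        (ℓ.comp (ContinuousLinearMap.snd ℝ _ _) - DL.comp (ContinuousLinearMap.fst ℝ _ _)) m :=
      h1.sub h2
    have hWm' : HasFDerivAt (fun m' : Phase n k => Wfun n k L m'.1 v₀ m'.2)
        ((fderiv ℝ G (m, v₀)).comp (ContinuousLinearMap.inl ℝ (Phase n k) _)) m :=
      by have := (hGd (m, v₀)).hasFDerivAt.comp m (hasFDerivAt_prodMk_left (𝕜 := ℝ) m v₀); exact this
    have huniq2 := hWm.unique hWm'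
    -- now show the two CLMs agree
    have hmapeq : ((fderiv ℝ G (m, v₀)).comp
        ((ContinuousLinearMap.id ℝ (Phase n k)).prod (fderiv ℝ V m)))
        = ℓ.comp (ContinuousLinearMap.snd ℝ _ _) -
            DL.comp (ContinuousLinearMap.fst ℝ _ _) := by
      refine ContinuousLinearMap.ext fun w => ?_
      have hsplit : ((w, fderiv ℝ V m w) : Phase n k × (Fin k → Fin n → ℝ))
          = (w, 0) + ((0 : Phase n k), fderiv ℝ V m w) := by
        simp [Prod.ext_iff]
      calc ((fderiv ℝ G (m, v₀)).comp
            ((ContinuousLinearMap.id ℝ (Phase n k)).prod (fderiv ℝ V m))) w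
          = fderiv ℝ G (m, v₀) (w, fderiv ℝ V m w) := rfl
        _ = fderiv ℝ G (m, v₀) ((w, 0) + ((0 : Phase n k), fderiv ℝ V m w)) := by
            rw [← hsplit]
        _ = fderiv ℝ G (m, v₀) (w, 0)
              + fderiv ℝ G (m, v₀) ((0 : Phase n k), fderiv ℝ V m w) := map_add _ _ _
        _ = fderiv ℝ G (m, v₀) (w, 0) := by rw [hinr, add_zero]
        _ = ((fderiv ℝ G (m, v₀)).comp (ContinuousLinearMap.inl ℝ (Phase n k) _)) w := by
            simp
        _ = (ℓ.comp (ContinuousLinearMap.snd ℝ (Fin (n + k) → ℝ) (MultiIdx (n + k) n → ℝ))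
              - DL.comp (ContinuousLinearMap.fst ℝ (Fin (n + k) → ℝ)
                  (MultiIdx (n + k) n → ℝ))) w := by rw [← huniq2]
    rw [hmapeq] at hHd
    exact hHd
  refine ⟨hsmooth, ?_, ?_⟩
  · intro m hm μ
    rw [(hkey m hm).fderiv]
    simp
  · intro m hm s
    rw [(hkey m hm).fderiv]
    simp [pairCLM_single]
end
end

section
/- Under the generalized Legendre condition, define the Hamiltonian tensor H^α_β(q,p) := Σ_i (∂L/∂v^i_α)(q, V(q,p)) · V^i_β(q,p) − δ^α_β L(q, V(q,p)) on O. Then for all α, β = 1,…,n, H^α_β(q,p) = δ^α_β H(q,p) − (∂⟨p,z⟩/∂z^β_α)|_{z = Z(q,p)}, where H(q,p) = ⟨p, V(q,p)⟩ − L(q, V(q,p)), Z_β(q,p) := ∂/∂x^β + Σ_i V^i_β(q,p) ∂/∂y^i, and ⟨p,z⟩ := ⟨p, z₁∧…∧zₙ⟩ is regarded as a function of the full matrix of components z = (z^μ_α). -/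
open scoped BigOperators

noncomputable section

-- auxiliary
def PAs (n k : ℕ) (s : MultiIdx (n + k) n) :
    (Fin (n + k) → ℝ) [⋀^Fin n]→ₗ[ℝ] ℝ :=
  Matrix.detRowAlternating.compLinearMap (LinearMap.funLeft ℝ ℝ (midx s))

lemma pairing_eq (n k : ℕ) (p : MultiIdx (n + k) n → ℝ) (z : Fin n → (Fin (n + k) → ℝ)) :
    pairing n k p z = ∑ s : MultiIdx (n + k) n, p s * PAs n k s z := by
  unfold pairing PAs
  refine Finset.sum_congr rfl fun s _ => ?_
  congr 1
  rw [← Matrix.det_transpose]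
  rfl


lemma pairing_diff' (n k : ℕ) (p : MultiIdx (n + k) n → ℝ) :
    Differentiable ℝ (fun z => pairing n k p z) := by
  unfold pairing
  simp only [Matrix.det_apply']
  refine Differentiable.fun_sum fun s _ => Differentiable.const_mul ?_ _
  refine Differentiable.fun_sum fun σ _ => Differentiable.const_mul ?_ _
  intro z
  have : ∀ i : Fin n, HasFDerivAt
      (fun z : Fin n → (Fin (n+k) → ℝ) => z i (midx s (σ i)))
      ((ContinuousLinearMap.proj (R := ℝ) (φ := fun _ : Fin (n+k) => ℝ) (midx s (σ i))).comp
        (ContinuousLinearMap.proj (R := ℝ) (φ := fun _ : Fin n => (Fin (n+k) → ℝ)) i)) z := by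
    intro i
    have h := ((ContinuousLinearMap.proj (R := ℝ) (φ := fun _ : Fin (n+k) => ℝ) (midx s (σ i))).comp
        (ContinuousLinearMap.proj (R := ℝ) (φ := fun _ : Fin n => (Fin (n+k) → ℝ)) i)).hasFDerivAt (x := z)
    exact h.congr_of_eventuallyEq (Filter.Eventually.of_forall fun _ => rfl)
  exact (HasFDerivAt.finset_prod (fun i _ => this i)).differentiableAt

lemma pairing_update_add (n k : ℕ) (p : MultiIdx (n + k) n → ℝ)
    (z : Fin n → (Fin (n + k) → ℝ)) (α : Fin n) (x y : Fin (n + k) → ℝ) :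
    pairing n k p (Function.update z α (x + y))
      = pairing n k p (Function.update z α x) + pairing n k p (Function.update z α y) := by
  simp only [pairing_eq, AlternatingMap.map_update_add, mul_add, Finset.sum_add_distrib]

lemma pairing_update_smul (n k : ℕ) (p : MultiIdx (n + k) n → ℝ)
    (z : Fin n → (Fin (n + k) → ℝ)) (α : Fin n) (c : ℝ) (x : Fin (n + k) → ℝ) :
    pairing n k p (Function.update z α (c • x))
      = c * pairing n k p (Function.update z α x) := by
  simp only [pairing_eq, AlternatingMap.map_update_smul, smul_eq_mul, Finset.mul_sum]
  ring_nf
  exact Finset.sum_congr rfl fun s _ => by ring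

lemma fderiv_pairing (n k : ℕ) (p : MultiIdx (n + k) n → ℝ)
    (z : Fin n → (Fin (n + k) → ℝ)) (α : Fin n) (w : Fin (n + k) → ℝ) :
    fderiv ℝ (fun z => pairing n k p z) z (Pi.single α w)
      = pairing n k p (Function.update z α w) := by
  have hline : HasLineDerivAt ℝ (fun z => pairing n k p z)
      (pairing n k p (Function.update z α w)) z (Pi.single α w) := by
    have heq : (fun t : ℝ => pairing n k p (z + t • (Pi.single α w : Fin n → Fin (n + k) → ℝ)))
        = fun t => pairing n k p z + t * pairing n k p (Function.update z α w) := by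
      funext t
      have h1 : z + t • (Pi.single α w : Fin n → Fin (n + k) → ℝ)
          = Function.update z α (z α + t • w) := by
        funext β
        by_cases h : β = α
        · subst h; simp
        · simp [h, Pi.single_apply]
      rw [h1, pairing_update_add, pairing_update_smul, Function.update_eq_self]
    show HasDerivAt _ _ _
    rw [heq]
    exact ((hasDerivAt_mul_const (x := (0:ℝ)) (pairing n k p (Function.update z α w)))).const_add (pairing n k p z)
  exact ((((pairing_diff' n k p) z).hasFDerivAt.hasLineDerivAt (Pi.single α w)).unique hline)

/-- the linear map `w ↦ pairing p (update z α w)`. -/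
def pairingUpd (n k : ℕ) (p : MultiIdx (n + k) n → ℝ)
    (z : Fin n → (Fin (n + k) → ℝ)) (α : Fin n) : (Fin (n + k) → ℝ) →ₗ[ℝ] ℝ where
  toFun w := pairing n k p (Function.update z α w)
  map_add' x y := pairing_update_add n k p z α x y
  map_smul' c x := pairing_update_smul n k p z α c x

lemma pairing_update_vanish (n k : ℕ) (p : MultiIdx (n + k) n → ℝ)
    (z : Fin n → (Fin (n + k) → ℝ)) {α β : Fin n} (hne : α ≠ β) :
    pairing n k p (Function.update z α (z β)) = 0 := by
  rw [pairing_eq]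
  refine Finset.sum_eq_zero fun s _ => ?_
  rw [AlternatingMap.map_eq_zero_of_eq _ _ (i := α) (j := β) ?_ hne, mul_zero]
  rw [Function.update_self, Function.update_of_ne (Ne.symm hne)]

def Tlin (n k : ℕ) : (Fin k → Fin n → ℝ) →ₗ[ℝ] (Fin n → Fin (n + k) → ℝ) where
  toFun v := fun β => Fin.append 0 (fun i => v i β)
  map_add' u v := by
    funext β μ
    induction μ using Fin.addCases with
    | left μ => simp
    | right μ => simp
  map_smul' c v := by
    funext β μ
    induction μ using Fin.addCases with
    | left μ => simp
    | right μ => simp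

lemma hasFDerivAt_zcol (n k : ℕ) (v : Fin k → Fin n → ℝ) :
    HasFDerivAt (zcol n k) ((LinearMap.toContinuousLinearMap (Tlin n k))) v := by
  have h := (LinearMap.toContinuousLinearMap (Tlin n k)).hasFDerivAt (x := v)
  have h2 := h.const_add (fun β : Fin n => Fin.append (Pi.single β 1) (0 : Fin k → ℝ))
  refine h2.congr_of_eventuallyEq (Filter.Eventually.of_forall fun u => ?_)
  funext β μ
  induction μ using Fin.addCases with
  | left μ => simp [zcol, Tlin, LinearMap.toContinuousLinearMap]
  | right μ => simp [zcol, Tlin, LinearMap.toContinuousLinearMap]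

lemma Tlin_single (n k : ℕ) (i : Fin k) (α : Fin n) :
    Tlin n k (Pi.single i (Pi.single α 1))
      = Pi.single α (Pi.single (Fin.natAdd n i) 1) := by
  funext β μ
  induction μ using Fin.addCases with
  | left μ =>
    by_cases hb : β = α
    · subst hb
      simp only [Tlin, LinearMap.coe_mk, AddHom.coe_mk, Fin.append_left, Pi.zero_apply,
        Pi.single_eq_same, Pi.single_apply]
      rw [if_neg (by simp [Fin.ext_iff]; omega)]
    · simp [Tlin, hb, Pi.single_apply]
  | right j =>
    by_cases hb : β = α <;> by_cases hj : j = i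
    · subst hb; subst hj; simp [Tlin, Pi.single_apply]
    · subst hb
      simp only [Tlin, LinearMap.coe_mk, AddHom.coe_mk, Fin.append_right, Pi.single_eq_same,
        Pi.single_apply]
      rw [if_neg hj, if_neg (by simp [Fin.ext_iff]; omega)]
      simp
    · subst hj
      simp [Tlin, hb, Pi.single_apply]
    · simp [Tlin, hb, hj, Pi.single_apply]

lemma zcol_col (n k : ℕ) (v : Fin k → Fin n → ℝ) (β : Fin n) :
    (Pi.single (Fin.castAdd k β) 1 : Fin (n + k) → ℝ)
      + ∑ i : Fin k, v i β • (Pi.single (Fin.natAdd n i) 1 : Fin (n + k) → ℝ)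
      = zcol n k v β := by
  funext μ
  induction μ using Fin.addCases with
  | left μ =>
    simp only [Pi.add_apply, Finset.sum_apply, Pi.smul_apply, smul_eq_mul, Pi.single_apply,
      zcol, Fin.append_left]
    rw [Finset.sum_eq_zero fun x _ => by
      rw [if_neg (by simp [Fin.ext_iff]; omega), mul_zero], add_zero]
    simp [Fin.ext_iff]
  | right j =>
    simp only [Pi.add_apply, Finset.sum_apply, Pi.smul_apply, smul_eq_mul, Pi.single_apply,
      zcol, Fin.append_right]
    rw [if_neg (by simp [Fin.ext_iff]; omega), zero_add]
    have : ∀ x : Fin k, (Fin.natAdd n j = Fin.natAdd n x) = (x = j) := by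
      intro x; simp [Fin.ext_iff]; constructor <;> (intro h; omega)
    simp only [this]
    simp [mul_ite]


/-- Under the generalized Legendre condition, the Hamiltonian tensor
`H^α_β(q,p) = Σ_i ∂L/∂v^i_α(q,V(q,p)) V^i_β(q,p) − δ^α_β L(q,V(q,p))` satisfies
`H^α_β = δ^α_β H(q,p) − (∂⟨p,z⟩/∂z^β_α)|_{z = Z(q,p)}`. -/
theorem stmt3 (n k : ℕ) (hn : 1 ≤ n) (hk : 1 ≤ k)
    (L : (Fin (n + k) → ℝ) → (Fin k → Fin n → ℝ) → ℝ)
    (hL : ContDiff ℝ (⊤ : ℕ∞) fun qv : (Fin (n + k) → ℝ) × (Fin k → Fin n → ℝ) => L qv.1 qv.2)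
    -- generalized Legendre condition
    (O : Set (Phase n k)) (hO : IsOpen O) (hOne : O.Nonempty)
    (V : Phase n k → (Fin k → Fin n → ℝ)) (hV : ContDiffOn ℝ (⊤ : ℕ∞) V O)
    (hcrit : ∀ m ∈ O, ∀ (i : Fin k) (α : Fin n),
      fderiv ℝ (fun v => Wfun n k L m.1 v m.2) (V m) (Pi.single i (Pi.single α 1)) = 0)
    (huniq : ∀ m ∈ O, ∀ v : Fin k → Fin n → ℝ,
      (∀ (i : Fin k) (α : Fin n),
        fderiv ℝ (fun v' => Wfun n k L m.1 v' m.2) v (Pi.single i (Pi.single α 1)) = 0) →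
      v = V m)
    -- the Hamiltonian
    (H : Phase n k → ℝ) (hH : ∀ m, H m = Wfun n k L m.1 (V m) m.2) :
    ∀ m ∈ O, ∀ α β : Fin n,
      (∑ i : Fin k,
          fderiv ℝ (fun v => L m.1 v) (V m) (Pi.single i (Pi.single α 1)) * V m i β)
        - (if α = β then L m.1 (V m) else 0)
      = (if α = β then H m else 0)
        - fderiv ℝ (fun z => pairing n k m.2 z) (zcol n k (V m))
            (Pi.single α (Pi.single (Fin.castAdd k β) 1)) := by
  intro m hm α β
  classical
  set q := m.1 with hq
  set p := m.2 with hp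
  set Z := zcol n k (V m) with hZ
  have hLq : Differentiable ℝ (fun v => L q v) := by
    intro v
    exact ((hL.differentiable (by simp)) (q, v)).comp v
      ((differentiableAt_const q).prodMk differentiableAt_id)
  have hP := pairing_diff' n k p
  have hcomp : HasFDerivAt (fun v => pairing n k p (zcol n k v))
      ((fderiv ℝ (fun z => pairing n k p z) Z).comp
        (LinearMap.toContinuousLinearMap (Tlin n k))) (V m) :=
    by have h := ((hP Z).hasFDerivAt).comp (V m) (hasFDerivAt_zcol n k (V m)); exact h
  have hWder : HasFDerivAt (fun v => Wfun n k L q v p)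
      (((fderiv ℝ (fun z => pairing n k p z) Z).comp
          (LinearMap.toContinuousLinearMap (Tlin n k)))
        - fderiv ℝ (fun v => L q v) (V m)) (V m) := by
    simpa [Wfun] using hcomp.fun_sub ((hLq (V m)).hasFDerivAt)
  have hDL : ∀ (i : Fin k) (γ : Fin n),
      fderiv ℝ (fun v => L q v) (V m) (Pi.single i (Pi.single γ 1))
        = pairing n k p (Function.update Z γ (Pi.single (Fin.natAdd n i) 1)) := by
    intro i γ
    have h0 := hcrit m hm i γ
    rw [hWder.fderiv, ContinuousLinearMap.sub_apply, sub_eq_zero,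
      ContinuousLinearMap.comp_apply] at h0
    rw [← h0, LinearMap.coe_toContinuousLinearMap', Tlin_single, fderiv_pairing]
  have hsum : (∑ i : Fin k,
        fderiv ℝ (fun v => L q v) (V m) (Pi.single i (Pi.single α 1)) * V m i β)
      = pairing n k p (Function.update Z α
          (∑ i : Fin k, V m i β • (Pi.single (Fin.natAdd n i) 1 : Fin (n + k) → ℝ))) := by
    have hms := map_sum (pairingUpd n k p Z α)
      (fun i : Fin k => V m i β • (Pi.single (Fin.natAdd n i) 1 : Fin (n + k) → ℝ))
      Finset.univ
    rw [show pairing n k p (Function.update Z α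
        (∑ i : Fin k, V m i β • (Pi.single (Fin.natAdd n i) 1 : Fin (n + k) → ℝ)))
      = (pairingUpd n k p Z α) (∑ i : Fin k,
          V m i β • (Pi.single (Fin.natAdd n i) 1 : Fin (n + k) → ℝ)) from rfl, hms]
    refine Finset.sum_congr rfl fun i _ => ?_
    rw [hDL i α, mul_comm]
    simp [pairingUpd, pairing_update_smul]
  have hsplit : pairing n k p (Function.update Z α
        ((Pi.single (Fin.castAdd k β) 1 : Fin (n + k) → ℝ)))
      + pairing n k p (Function.update Z α
          (∑ i : Fin k, V m i β • (Pi.single (Fin.natAdd n i) 1 : Fin (n + k) → ℝ)))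
      = (if α = β then pairing n k p Z else 0) := by
    rw [← pairing_update_add, zcol_col n k (V m) β]
    by_cases h : α = β
    · subst h
      rw [if_pos rfl]
      congr 1
      exact Function.update_eq_self α Z
    · rw [if_neg h]
      exact pairing_update_vanish n k p Z h
  rw [fderiv_pairing, hH m, hsum]
  simp only [Wfun, ← hp, ← hq, ← hZ]
  by_cases h : α = β
  · subst h
    rw [if_pos rfl] at hsplit
    rw [if_pos rfl, if_pos rfl]
    linarith
  · rw [if_neg h] at hsplit
    rw [if_neg h, if_neg h]
    linarith
end
end

section
/- Assume the generalized Legendre condition and let x ↦ (q(x), p(x)) be a smooth map from ℝⁿ to O. Then the following are equivalent: (i) there exists a smooth map u : ℝⁿ → ℝᵏ and a function w : ℝⁿ → ℝ such that q(x) = (x, u(x)) and (x, u(x), du(x), w(x)) corresponds to (q(x), p(x)) under the Legendre correspondence (i.e. du(x) = V(q(x),p(x)) and w(x) = W(q(x),du(x),p(x))); (ii) q(x) = (x,u(x)) for some smooth u and for every increasing multi-index μ₁ < … < μₙ the Jacobian minor equations hold: ∂(q^{μ₁},…,q^{μₙ})/∂(x¹,…,xⁿ)(x) = ∂H/∂p_{μ₁…μₙ}(q(x),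 p(x)), where ∂(q^{μ₁},…,q^{μₙ})/∂(x¹,…,xⁿ) denotes the determinant det( ∂q^{μ_a}/∂x^b )_{1≤a,b≤n}. -/
open scoped BigOperators

noncomputable section

/-- The Jacobian minor `∂(q^{μ₁},…,q^{μₙ})/∂(x¹,…,xⁿ)` of `x ↦ q(x)`. -/
def jacMinor (n k : ℕ) (q : (Fin n → ℝ) → (Fin (n + k) → ℝ)) (s : MultiIdx (n + k) n)
    (x : Fin n → ℝ) : ℝ :=
  Matrix.det (Matrix.of fun a b : Fin n =>
    fderiv ℝ (fun x' => q x' (midx s a)) x (Pi.single b 1))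

-- basic midx facts
lemma midx_mem {N n : ℕ} (s : MultiIdx N n) (a : Fin n) : midx s a ∈ s.1 :=
  (s.1.orderIsoOfFin s.2 a).2

lemma midx_injective {N n : ℕ} (s : MultiIdx N n) : Function.Injective (midx s) :=
  fun a b h => (s.1.orderIsoOfFin s.2).injective (Subtype.ext h)

lemma midx_surj {N n : ℕ} (s : MultiIdx N n) {x : Fin N} (hx : x ∈ s.1) :
    ∃ a, midx s a = x := by
  refine ⟨(s.1.orderIsoOfFin s.2).symm ⟨x, hx⟩, ?_⟩
  simp [midx]

-- smoothness of det of smooth entries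
lemma contDiff_det_entries {X : Type*} [NormedAddCommGroup X] [NormedSpace ℝ X] {n : ℕ}
    (f : X → Fin n → Fin n → ℝ) (hf : ∀ a b, ContDiff ℝ (⊤ : ℕ∞) (fun x => f x a b)) :
    ContDiff ℝ (⊤ : ℕ∞) (fun x => Matrix.det (Matrix.of fun a b => f x a b)) := by
  have h : (fun x => Matrix.det (Matrix.of fun a b => f x a b))
      = fun x => ∑ σ : Equiv.Perm (Fin n),
          ((Equiv.Perm.sign σ : ℤ) : ℝ) * ∏ a, f x (σ a) a := by
    funext x
    rw [Matrix.det_apply']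
    rfl
  rw [h]
  exact ContDiff.sum fun σ _ => contDiff_const.mul (contDiff_prod fun a _ => hf (σ a) a)


lemma contDiff_zcol_entry {n k : ℕ} (b : Fin n) (μ : Fin (n + k)) :
    ContDiff ℝ (⊤ : ℕ∞) (fun v : Fin k → Fin n → ℝ => zcol n k v b μ) := by
  refine Fin.addCases (motive := fun μ => ContDiff ℝ (⊤ : ℕ∞) fun v : Fin k → Fin n → ℝ =>
    zcol n k v b μ) (fun j => ?_) (fun i => ?_) μ
  · simp only [zcol, Fin.append_left]
    fun_prop
  · simp only [zcol, Fin.append_right]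
    fun_prop

lemma contDiff_Wfull (n k : ℕ) (L : (Fin (n + k) → ℝ) → (Fin k → Fin n → ℝ) → ℝ)
    (hL : ContDiff ℝ (⊤ : ℕ∞) fun qv : (Fin (n + k) → ℝ) × (Fin k → Fin n → ℝ) => L qv.1 qv.2) :
    ContDiff ℝ (⊤ : ℕ∞) (fun m : (Fin (n + k) → ℝ) × (Fin k → Fin n → ℝ) × (MultiIdx (n + k) n → ℝ) =>
      Wfun n k L m.1 m.2.1 m.2.2) := by
  unfold Wfun pairing
  apply ContDiff.sub
  · apply ContDiff.sum
    intro s _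
    apply ContDiff.mul
    · fun_prop
    · have h2 : ContDiff ℝ (⊤ : ℕ∞) (fun m : (Fin (n + k) → ℝ) × (Fin k → Fin n → ℝ) ×
          (MultiIdx (n + k) n → ℝ) => m.2.1) := by fun_prop
      exact contDiff_det_entries (fun (m : (Fin (n + k) → ℝ) × (Fin k → Fin n → ℝ) × (MultiIdx (n + k) n → ℝ)) => fun a b => zcol n k m.2.1 b (midx s a))
        (fun a b => (contDiff_zcol_entry b (midx s a)).comp h2)
  · exact hL.comp (contDiff_fst.prodMk (contDiff_fst.comp contDiff_snd))


lemma pairing_hasFDerivAt (n k : ℕ) (z : Fin n → (Fin (n + k) → ℝ))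
    (p₀ : MultiIdx (n + k) n → ℝ) :
    HasFDerivAt (fun p => pairing n k p z)
      (∑ s : MultiIdx (n + k) n,
        Matrix.det (Matrix.of fun a b : Fin n => z b (midx s a)) •
          (ContinuousLinearMap.proj s : (MultiIdx (n + k) n → ℝ) →L[ℝ] ℝ)) p₀ := by
  unfold pairing
  apply HasFDerivAt.fun_sum
  intro s _
  exact ((ContinuousLinearMap.proj s : (MultiIdx (n + k) n → ℝ) →L[ℝ] ℝ).hasFDerivAt).mul_const _

lemma sum_smul_proj_apply {ι : Type*} [Fintype ι] [DecidableEq ι] (c : ι → ℝ) (s₀ : ι) :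
    (∑ s : ι, c s • (ContinuousLinearMap.proj s : (ι → ℝ) →L[ℝ] ℝ)) (Pi.single s₀ 1) = c s₀ := by
  simp only [ContinuousLinearMap.coe_sum', Finset.sum_apply, ContinuousLinearMap.coe_smul',
    Pi.smul_apply, ContinuousLinearMap.proj_apply, Pi.single_apply, smul_eq_mul, mul_ite,
    mul_one, mul_zero]
  simp

lemma pi_matrix_decomp {n k : ℕ} (dv : Fin k → Fin n → ℝ) :
    dv = ∑ i : Fin k, ∑ α : Fin n, dv i α • (Pi.single i (Pi.single α (1:ℝ)) : Fin k → Fin n → ℝ) := by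
  funext j β
  simp only [Finset.sum_apply, Pi.smul_apply, smul_eq_mul, Pi.single_apply]
  simp [apply_ite (fun f : Fin n → ℝ => f β), Finset.sum_ite_eq, Pi.single_apply, mul_ite]

lemma crit_zero {n k : ℕ} (g : (Fin k → Fin n → ℝ) → ℝ) (v : Fin k → Fin n → ℝ)
    (hg : ∀ (i : Fin k) (α : Fin n), fderiv ℝ g v (Pi.single i (Pi.single α 1)) = 0)
    (dv : Fin k → Fin n → ℝ) : fderiv ℝ g v dv = 0 := by
  conv_lhs => rw [pi_matrix_decomp dv]
  rw [map_sum]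
  simp [map_sum, map_smul, hg]


set_option maxHeartbeats 2000000 in
lemma hamD (n k : ℕ) (L : (Fin (n + k) → ℝ) → (Fin k → Fin n → ℝ) → ℝ)
    (hL : ContDiff ℝ (⊤ : ℕ∞) fun qv : (Fin (n + k) → ℝ) × (Fin k → Fin n → ℝ) => L qv.1 qv.2)
    (O : Set (Phase n k)) (hO : IsOpen O)
    (V : Phase n k → (Fin k → Fin n → ℝ)) (hV : ContDiffOn ℝ (⊤ : ℕ∞) V O)
    (hcrit : ∀ m ∈ O, ∀ (i : Fin k) (α : Fin n),
      fderiv ℝ (fun v => Wfun n k L m.1 v m.2) (V m) (Pi.single i (Pi.single α 1)) = 0)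
    (H : Phase n k → ℝ) (hH : ∀ m, H m = Wfun n k L m.1 (V m) m.2)
    (m : Phase n k) (hm : m ∈ O) (s : MultiIdx (n + k) n) :
    fderiv ℝ H m ((0 : Fin (n + k) → ℝ), (Pi.single s 1 : MultiIdx (n + k) n → ℝ))
      = Matrix.det (Matrix.of fun a b : Fin n => zcol n k (V m) b (midx s a)) := by
  classical
  have hWsm := contDiff_Wfull n k L hL
  have hVd : DifferentiableAt ℝ V m := (hV.contDiffAt (hO.mem_nhds hm)).differentiableAt (by simp)
  have hGd : HasFDerivAt (fun m' : Phase n k => (m'.1, (V m', m'.2)))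
      ((ContinuousLinearMap.fst ℝ (Fin (n + k) → ℝ) (MultiIdx (n + k) n → ℝ)).prod
        ((fderiv ℝ V m).prod
          (ContinuousLinearMap.snd ℝ (Fin (n + k) → ℝ) (MultiIdx (n + k) n → ℝ)))) m :=
    HasFDerivAt.prodMk (hasFDerivAt_fst) (HasFDerivAt.prodMk hVd.hasFDerivAt hasFDerivAt_snd)
  have hWd : HasFDerivAt
      (fun m' : (Fin (n + k) → ℝ) × (Fin k → Fin n → ℝ) × (MultiIdx (n + k) n → ℝ) =>
        Wfun n k L m'.1 m'.2.1 m'.2.2)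
      (fderiv ℝ (fun m' : (Fin (n + k) → ℝ) × (Fin k → Fin n → ℝ) × (MultiIdx (n + k) n → ℝ) =>
        Wfun n k L m'.1 m'.2.1 m'.2.2) (m.1, (V m, m.2))) (m.1, (V m, m.2)) :=
    (hWsm.differentiable (by simp) _).hasFDerivAt
  set DW := fderiv ℝ (fun m' : (Fin (n + k) → ℝ) × (Fin k → Fin n → ℝ) ×
      (MultiIdx (n + k) n → ℝ) => Wfun n k L m'.1 m'.2.1 m'.2.2) (m.1, (V m, m.2)) with hDWdef
  have hHd : HasFDerivAt H
      (DW.comp ((ContinuousLinearMap.fst ℝ (Fin (n + k) → ℝ) (MultiIdx (n + k) n → ℝ)).prod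
        ((fderiv ℝ V m).prod
          (ContinuousLinearMap.snd ℝ (Fin (n + k) → ℝ) (MultiIdx (n + k) n → ℝ))))) m := by
    have hHeq : H = (fun m' : (Fin (n + k) → ℝ) × (Fin k → Fin n → ℝ) ×
        (MultiIdx (n + k) n → ℝ) => Wfun n k L m'.1 m'.2.1 m'.2.2) ∘
        (fun m' : Phase n k => (m'.1, (V m', m'.2))) := funext fun m' => hH m'
    rw [hHeq]
    exact hWd.comp m hGd
  rw [hHd.fderiv]
  set dv := fderiv ℝ V m ((0 : Fin (n + k) → ℝ), (Pi.single s 1 : MultiIdx (n + k) n → ℝ))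
    with hdv
  have e1 : (DW.comp ((ContinuousLinearMap.fst ℝ (Fin (n + k) → ℝ) (MultiIdx (n + k) n → ℝ)).prod
        ((fderiv ℝ V m).prod
          (ContinuousLinearMap.snd ℝ (Fin (n + k) → ℝ) (MultiIdx (n + k) n → ℝ)))))
      ((0 : Fin (n + k) → ℝ), (Pi.single s 1 : MultiIdx (n + k) n → ℝ))
      = DW ((0 : Fin (n + k) → ℝ), (dv, (Pi.single s 1 : MultiIdx (n + k) n → ℝ))) := by
    simp [hdv]
  rw [e1]
  have split : ((0 : Fin (n + k) → ℝ), (dv, (Pi.single s 1 : MultiIdx (n + k) n → ℝ)))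
      = ((0 : Fin (n + k) → ℝ), (dv, (0 : MultiIdx (n + k) n → ℝ)))
        + ((0 : Fin (n + k) → ℝ), ((0 : Fin k → Fin n → ℝ),
            (Pi.single s 1 : MultiIdx (n + k) n → ℝ))) := by
    simp
  rw [split, map_add]
  -- first term vanishes by the critical point condition
  have hι₂ : HasFDerivAt (fun v : Fin k → Fin n → ℝ => (m.1, (v, m.2)))
      ((0 : (Fin k → Fin n → ℝ) →L[ℝ] (Fin (n + k) → ℝ)).prod
        ((ContinuousLinearMap.id ℝ (Fin k → Fin n → ℝ)).prod
          (0 : (Fin k → Fin n → ℝ) →L[ℝ] (MultiIdx (n + k) n → ℝ)))) (V m) :=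
    HasFDerivAt.prodMk (hasFDerivAt_const m.1 _) (HasFDerivAt.prodMk (hasFDerivAt_id _) (hasFDerivAt_const m.2 _))
  have hpart2 : HasFDerivAt (fun v => Wfun n k L m.1 v m.2)
      (DW.comp ((0 : (Fin k → Fin n → ℝ) →L[ℝ] (Fin (n + k) → ℝ)).prod
        ((ContinuousLinearMap.id ℝ (Fin k → Fin n → ℝ)).prod
          (0 : (Fin k → Fin n → ℝ) →L[ℝ] (MultiIdx (n + k) n → ℝ))))) (V m) :=
    by have := hWd.comp (V m) hι₂; exact this
  have t1 : DW ((0 : Fin (n + k) → ℝ), (dv, (0 : MultiIdx (n + k) n → ℝ))) = 0 := by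
    have h0 := crit_zero (fun v => Wfun n k L m.1 v m.2) (V m) (hcrit m hm) dv
    rw [hpart2.fderiv] at h0
    simpa using h0
  -- second term is the pairing coefficient
  have hι₃ : HasFDerivAt (fun p' : MultiIdx (n + k) n → ℝ => (m.1, (V m, p')))
      ((0 : (MultiIdx (n + k) n → ℝ) →L[ℝ] (Fin (n + k) → ℝ)).prod
        ((0 : (MultiIdx (n + k) n → ℝ) →L[ℝ] (Fin k → Fin n → ℝ)).prod
          (ContinuousLinearMap.id ℝ (MultiIdx (n + k) n → ℝ)))) m.2 :=
    HasFDerivAt.prodMk (hasFDerivAt_const m.1 _) (HasFDerivAt.prodMk (hasFDerivAt_const (V m) _) (hasFDerivAt_id _))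
  have hpart3 : HasFDerivAt (fun p' => Wfun n k L m.1 (V m) p')
      (DW.comp ((0 : (MultiIdx (n + k) n → ℝ) →L[ℝ] (Fin (n + k) → ℝ)).prod
        ((0 : (MultiIdx (n + k) n → ℝ) →L[ℝ] (Fin k → Fin n → ℝ)).prod
          (ContinuousLinearMap.id ℝ (MultiIdx (n + k) n → ℝ))))) m.2 :=
    by have := hWd.comp m.2 hι₃; exact this
  have hpair : HasFDerivAt (fun p' => Wfun n k L m.1 (V m) p')
      (∑ s' : MultiIdx (n + k) n,
        Matrix.det (Matrix.of fun a b : Fin n => zcol n k (V m) b (midx s' a)) •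
          (ContinuousLinearMap.proj s' : (MultiIdx (n + k) n → ℝ) →L[ℝ] ℝ)) m.2 := by
    unfold Wfun
    exact (pairing_hasFDerivAt n k (zcol n k (V m)) m.2).sub_const _
  have huni := hpart3.unique hpair
  have t2 : DW ((0 : Fin (n + k) → ℝ), ((0 : Fin k → Fin n → ℝ),
      (Pi.single s 1 : MultiIdx (n + k) n → ℝ)))
      = Matrix.det (Matrix.of fun a b : Fin n => zcol n k (V m) b (midx s a)) := by
    have e2 : DW ((0 : Fin (n + k) → ℝ), ((0 : Fin k → Fin n → ℝ),
        (Pi.single s 1 : MultiIdx (n + k) n → ℝ)))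
        = (DW.comp ((0 : (MultiIdx (n + k) n → ℝ) →L[ℝ] (Fin (n + k) → ℝ)).prod
          ((0 : (MultiIdx (n + k) n → ℝ) →L[ℝ] (Fin k → Fin n → ℝ)).prod
            (ContinuousLinearMap.id ℝ (MultiIdx (n + k) n → ℝ)))))
          (Pi.single s 1 : MultiIdx (n + k) n → ℝ) := by simp
    rw [e2, huni, sum_smul_proj_apply]
  rw [t1, t2, zero_add]


lemma fderiv_q_eq_zcol {n k : ℕ} (q : (Fin n → ℝ) → (Fin (n + k) → ℝ))
    (u : (Fin n → ℝ) → (Fin k → ℝ)) (hqu : ∀ x, q x = Fin.append x (u x))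
    (x : Fin n → ℝ) (μ : Fin (n + k)) (b : Fin n) :
    fderiv ℝ (fun x' => q x' μ) x (Pi.single b 1) = zcol n k (jac u x) b μ := by
  refine Fin.addCases (motive := fun μ => fderiv ℝ (fun x' => q x' μ) x (Pi.single b 1)
    = zcol n k (jac u x) b μ) (fun j => ?_) (fun i => ?_) μ
  · show (fderiv ℝ (fun x' => q x' (Fin.castAdd k j)) x) (Pi.single b 1)
      = zcol n k (jac u x) b (Fin.castAdd k j)
    have h1 : (fun x' => q x' (Fin.castAdd k j)) = fun x' : Fin n → ℝ => x' j := by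
      funext x'
      rw [hqu x']
      exact Fin.append_left _ _ j
    rw [h1]
    have h2 : (fun x' : Fin n → ℝ => x' j)
        = (ContinuousLinearMap.proj j : (Fin n → ℝ) →L[ℝ] ℝ) := rfl
    rw [h2, ContinuousLinearMap.fderiv]
    simp [zcol, Fin.append_left]
  · show (fderiv ℝ (fun x' => q x' (Fin.natAdd n i)) x) (Pi.single b 1)
      = zcol n k (jac u x) b (Fin.natAdd n i)
    have h1 : (fun x' => q x' (Fin.natAdd n i)) = fun x' => u x' i := by
      funext x'
      rw [hqu x']
      exact Fin.append_right _ _ i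
    rw [h1]
    simp [zcol, Fin.append_right, jac]

lemma jacMinor_eq_zcol {n k : ℕ} (q : (Fin n → ℝ) → (Fin (n + k) → ℝ))
    (u : (Fin n → ℝ) → (Fin k → ℝ)) (hqu : ∀ x, q x = Fin.append x (u x))
    (x : Fin n → ℝ) (s : MultiIdx (n + k) n) :
    jacMinor n k q s x
      = Matrix.det (Matrix.of fun a b : Fin n => zcol n k (jac u x) b (midx s a)) := by
  unfold jacMinor
  congr 1
  ext a b
  exact fderiv_q_eq_zcol q u hqu x (midx s a) b


lemma single_eq_single_swap {n : ℕ} (b c : Fin n) :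
    (Pi.single c (1:ℝ) : Fin n → ℝ) b = (Pi.single b (1:ℝ) : Fin n → ℝ) c := by
  by_cases h : b = c
  · subst h; rfl
  · rw [Pi.single_eq_of_ne h, Pi.single_eq_of_ne (Ne.symm h)]

lemma det_updateRow_lin {n : ℕ} (M : Matrix (Fin n) (Fin n) ℝ) (j : Fin n)
    (t : Finset (Fin n)) (c : Fin n → ℝ) (f : Fin n → (Fin n → ℝ)) :
    (M.updateRow j (∑ b ∈ t, c b • f b)).det = ∑ b ∈ t, c b * (M.updateRow j (f b)).det := by
  classical
  induction t using Finset.induction with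
  | empty =>
    simp only [Finset.sum_empty]
    try exact Matrix.det_eq_zero_of_row_eq_zero j (fun b => by simp)
  | insert _ _ hnotmem ih =>
    rw [Finset.sum_insert hnotmem, Matrix.det_updateRow_add, Matrix.det_updateRow_smul,
      Finset.sum_insert hnotmem, ih]
    try ring

set_option maxHeartbeats 1000000 in
lemma minor_extract (n k : ℕ) (A B : Fin k → Fin n → ℝ) (i : Fin k) (β : Fin n)
    (h : ∀ s : MultiIdx (n + k) n,
      Matrix.det (Matrix.of fun a b : Fin n => zcol n k A b (midx s a))
        = Matrix.det (Matrix.of fun a b : Fin n => zcol n k B b (midx s a))) :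
    A i β = B i β := by
  classical
  have hcainj : Function.Injective (Fin.castAdd (n := n) k) := fun a b hab => by
    apply Fin.ext
    simpa using congrArg Fin.val hab
  have hdisj : Fin.natAdd n i ∉ (Finset.univ.erase β).image (Fin.castAdd k) := by
    intro hmem
    rcases Finset.mem_image.1 hmem with ⟨γ, _, hγ2⟩
    have := congrArg Fin.val hγ2
    simp at this
    omega
  have hcard : (((Finset.univ.erase β).image (Fin.castAdd k)) ∪ {Fin.natAdd n i}).card = n := by
    rw [Finset.card_union_of_disjoint (by simpa [Finset.disjoint_singleton_right] using hdisj),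
      Finset.card_image_of_injective _ hcainj, Finset.card_erase_of_mem (Finset.mem_univ β),
      Finset.card_singleton, Finset.card_univ, Fintype.card_fin]
    have hnpos : 0 < n := β.pos
    omega
  set s : MultiIdx (n + k) n :=
    ⟨((Finset.univ.erase β).image (Fin.castAdd k)) ∪ {Fin.natAdd n i}, hcard⟩ with hsdef
  have hmem_nat : Fin.natAdd n i ∈ s.1 := Finset.mem_union_right _ (Finset.mem_singleton_self _)
  obtain ⟨a₀, ha₀⟩ := midx_surj s hmem_nat
  have hchar : ∀ a, a ≠ a₀ → ∃ γ : Fin n, γ ≠ β ∧ midx s a = Fin.castAdd k γ := by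
    intro a ha
    have hm := midx_mem s a
    rcases Finset.mem_union.1 hm with hm | hm
    · rcases Finset.mem_image.1 hm with ⟨γ, hγ, hγ2⟩
      exact ⟨γ, Finset.ne_of_mem_erase hγ, hγ2.symm⟩
    · exact absurd (midx_injective s ((Finset.mem_singleton.1 hm).trans ha₀.symm)) ha
  set MB : Matrix (Fin n) (Fin n) ℝ :=
    Matrix.of (fun a b : Fin n => zcol n k B b (midx s a)) with hMB
  have hMA : (Matrix.of fun a b : Fin n => zcol n k A b (midx s a))
      = MB.updateRow a₀ (fun b => A i b) := by
    ext a b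
    by_cases ha : a = a₀
    · subst ha
      rw [Matrix.updateRow_self]
      show zcol n k A b (midx s a) = A i b
      rw [ha₀]
      simp [zcol, Fin.append_right]
    · rw [Matrix.updateRow_ne ha]
      obtain ⟨γ, -, hγ2⟩ := hchar a ha
      show zcol n k A b (midx s a) = zcol n k B b (midx s a)
      rw [hγ2]
      simp [zcol, Fin.append_left]
  have hMBrow : MB = MB.updateRow a₀ (fun b => B i b) := by
    ext a b
    by_cases ha : a = a₀
    · subst ha
      rw [Matrix.updateRow_self]
      show zcol n k B b (midx s a) = B i b
      rw [ha₀]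
      simp [zcol, Fin.append_right]
    · rw [Matrix.updateRow_ne ha]
  have hD : ∀ r : Fin n → ℝ,
      (MB.updateRow a₀ r).det = ∑ b, r b * (MB.updateRow a₀ (Pi.single b 1)).det := by
    intro r
    have hr : r = ∑ b, r b • (Pi.single b (1:ℝ) : Fin n → ℝ) := by
      funext c
      simp [Pi.single_apply, Finset.sum_ite_eq]
    calc (MB.updateRow a₀ r).det
        = (MB.updateRow a₀ (∑ b, r b • (Pi.single b (1:ℝ) : Fin n → ℝ))).det := by rw [← hr]
      _ = ∑ b, r b * (MB.updateRow a₀ (Pi.single b 1)).det :=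
          det_updateRow_lin MB a₀ Finset.univ r _
  have hvan : ∀ b : Fin n, b ≠ β → (MB.updateRow a₀ (Pi.single b 1)).det = 0 := by
    intro b hb
    have hmemb : Fin.castAdd k b ∈ s.1 :=
      Finset.mem_union_left _
        (Finset.mem_image_of_mem _ (Finset.mem_erase.2 ⟨hb, Finset.mem_univ b⟩))
    obtain ⟨a1, ha1⟩ := midx_surj s hmemb
    have ha1a0 : a1 ≠ a₀ := by
      intro e
      rw [e, ha₀] at ha1
      have := congrArg Fin.val ha1
      simp at this
      omega
    refine Matrix.det_zero_of_row_eq ha1a0 ?_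
    funext c
    rw [Matrix.updateRow_ne ha1a0, Matrix.updateRow_self]
    show zcol n k B c (midx s a1) = (Pi.single b (1:ℝ) : Fin n → ℝ) c
    rw [ha1]
    simp only [zcol, Fin.append_left]
    exact single_eq_single_swap b c
  -- the nonvanishing coefficient
  set g : Fin n → Fin n := fun a => if h : (midx s a).1 < n then ⟨(midx s a).1, h⟩ else β
    with hgdef
  have hga₀ : g a₀ = β := by
    rw [hgdef]
    simp only
    rw [dif_neg]
    rw [ha₀]
    simp
  have hgother : ∀ a (ha : a ≠ a₀) γ (hγ : midx s a = Fin.castAdd k γ), g a = γ := by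
    intro a ha γ hγ
    rw [hgdef]
    simp only
    rw [dif_pos (by rw [hγ]; simp [Fin.is_lt])]
    apply Fin.ext
    simp [hγ]
  have hginj : Function.Injective g := by
    intro a a' he
    by_cases ha : a = a₀ <;> by_cases ha' : a' = a₀
    · rw [ha, ha']
    · obtain ⟨γ', hγ'ne, hγ'⟩ := hchar a' ha'
      rw [ha, hga₀, hgother a' ha' γ' hγ'] at he
      exact absurd he.symm hγ'ne
    · obtain ⟨γ, hγne, hγ⟩ := hchar a ha
      rw [ha', hga₀, hgother a ha γ hγ] at he
      exact absurd he hγne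
    · obtain ⟨γ, hγne, hγ⟩ := hchar a ha
      obtain ⟨γ', hγ'ne, hγ'⟩ := hchar a' ha'
      rw [hgother a ha γ hγ, hgother a' ha' γ' hγ'] at he
      apply midx_injective s
      rw [hγ, hγ', he]
  have hnz : (MB.updateRow a₀ (Pi.single β 1)).det ≠ 0 := by
    set σ : Equiv.Perm (Fin n) :=
      Equiv.ofBijective g (Finite.injective_iff_bijective.mp hginj) with hσ
    have hNe : MB.updateRow a₀ (Pi.single β 1)
        = (1 : Matrix (Fin n) (Fin n) ℝ).submatrix σ id := by
      ext a c
      have hσa : σ a = g a := rfl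
      rw [Matrix.submatrix_apply, hσa, id_eq, Matrix.one_apply]
      by_cases ha : a = a₀
      · subst ha
        rw [Matrix.updateRow_self, hga₀, Pi.single_apply]
        by_cases hc : c = β <;> simp [hc, Ne.symm, eq_comm]
      · rw [Matrix.updateRow_ne ha]
        obtain ⟨γ, -, hγ⟩ := hchar a ha
        show zcol n k B c (midx s a) = _
        rw [hγ, hgother a ha γ hγ]
        simp only [zcol, Fin.append_left]
        rw [Pi.single_apply]
    rw [hNe, Matrix.det_permute]
    rcases Int.units_eq_one_or (Equiv.Perm.sign σ) with h1 | h1 <;> simp [h1]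
  -- conclude
  have hexp : ∀ C : Fin k → Fin n → ℝ,
      (MB.updateRow a₀ (fun b => C i b)).det
        = C i β * (MB.updateRow a₀ (Pi.single β 1)).det := by
    intro C
    rw [hD, Finset.sum_eq_single β]
    · intro b _ hb
      rw [hvan b hb, mul_zero]
    · intro hβ
      exact absurd (Finset.mem_univ β) hβ
  have hAB := h s
  rw [hMA, hexp A, ← hMB] at hAB
  conv at hAB => rhs; rw [hMBrow, hexp B]
  exact mul_right_cancel₀ hnz hAB

/-- For a smooth map `x ↦ (q(x),p(x))` into `O`, being Legendre-correspondent
to `(x, u(x), du(x), w(x))` for some smooth `u` is equivalent to `q(x) = (x,u(x))` together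
with the Jacobian-minor Hamilton equations
`∂(q^{μ₁},…,q^{μₙ})/∂(x¹,…,xⁿ) = ∂H/∂p_{μ₁…μₙ}(q,p)`. -/
theorem stmt4 (n k : ℕ) (hn : 1 ≤ n) (hk : 1 ≤ k)
    (L : (Fin (n + k) → ℝ) → (Fin k → Fin n → ℝ) → ℝ)
    (hL : ContDiff ℝ (⊤ : ℕ∞) fun qv : (Fin (n + k) → ℝ) × (Fin k → Fin n → ℝ) => L qv.1 qv.2)
    -- generalized Legendre condition
    (O : Set (Phase n k)) (hO : IsOpen O) (hOne : O.Nonempty)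
    (V : Phase n k → (Fin k → Fin n → ℝ)) (hV : ContDiffOn ℝ (⊤ : ℕ∞) V O)
    (hcrit : ∀ m ∈ O, ∀ (i : Fin k) (α : Fin n),
      fderiv ℝ (fun v => Wfun n k L m.1 v m.2) (V m) (Pi.single i (Pi.single α 1)) = 0)
    (huniq : ∀ m ∈ O, ∀ v : Fin k → Fin n → ℝ,
      (∀ (i : Fin k) (α : Fin n),
        fderiv ℝ (fun v' => Wfun n k L m.1 v' m.2) v (Pi.single i (Pi.single α 1)) = 0) →
      v = V m)
    -- the Hamiltonian
    (H : Phase n k → ℝ) (hH : ∀ m, H m = Wfun n k L m.1 (V m) m.2)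
    -- a smooth map from ℝⁿ into O
    (q : (Fin n → ℝ) → (Fin (n + k) → ℝ)) (p : (Fin n → ℝ) → (MultiIdx (n + k) n → ℝ))
    (hq : ContDiff ℝ (⊤ : ℕ∞) q) (hp : ContDiff ℝ (⊤ : ℕ∞) p)
    (hrange : ∀ x, (q x, p x) ∈ O) :
    -- (i) ↔ (ii)
    ((∃ u : (Fin n → ℝ) → (Fin k → ℝ), ContDiff ℝ (⊤ : ℕ∞) u ∧
        (∀ x, q x = Fin.append x (u x)) ∧
        (∃ w : (Fin n → ℝ) → ℝ, ∀ x, Wfun n k L (q x) (jac u x) (p x) = w x) ∧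
        (∀ x, jac u x = V (q x, p x)))
      ↔
      (∃ u : (Fin n → ℝ) → (Fin k → ℝ), ContDiff ℝ (⊤ : ℕ∞) u ∧
        (∀ x, q x = Fin.append x (u x)) ∧
        (∀ x, ∀ s : MultiIdx (n + k) n,
          jacMinor n k q s x
            = fderiv ℝ H (q x, p x)
                ((0 : Fin (n + k) → ℝ), (Pi.single s 1 : MultiIdx (n + k) n → ℝ))))) := by
  constructor
  · rintro ⟨u, hu, hqu, -, hduV⟩
    refine ⟨u, hu, hqu, fun x s => ?_⟩
    rw [jacMinor_eq_zcol q u hqu x s, hduV x,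
      hamD n k L hL O hO V hV hcrit H hH (q x, p x) (hrange x) s]
  · rintro ⟨u, hu, hqu, hmin⟩
    refine ⟨u, hu, hqu, ⟨fun x => Wfun n k L (q x) (jac u x) (p x), fun x => rfl⟩,
      fun x => ?_⟩
    funext i β
    refine minor_extract n k (jac u x) (V (q x, p x)) i β (fun s => ?_)
    rw [← jacMinor_eq_zcol q u hqu x s, hmin x s,
      hamD n k L hL O hO V hV hcrit H hH (q x, p x) (hrange x) s]
end
end

section
/- Assume the generalized Legendre condition and let x ↦ (q(x), p(x)) be a smooth solution of the generalized Hamilton equations: ∂(q^{μ₁},…,q^{μₙ})/∂(x¹,…,xⁿ) = ∂H/∂p_{μ₁…μₙ}(q,p) for all μ₁<…<μₙ, and Σ_α Σ_{μ₁<…<μₙ, μ_α = n+i} ∂(q^{μ₁},…,q^{μ_{α−1}}, p_{μ₁…μₙ}, q^{μ_{α+1}},…,q^{μₙ})/∂(x¹,…,xⁿ) = − (∂H/∂y^i)(q,p) for all i = 1,…,k, arising from a Legendre-correspondent critical point of the Lagrangian. Then for every β = 1,…,n the additional equations hold: Σ_α Σ_{μ₁<…<μₙ, μ_α = β} ∂(q^{μ₁},…,q^{μ_{α−1}},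 p_{μ₁…μₙ}, q^{μ_{α+1}},…,q^{μₙ})/∂(x¹,…,xⁿ)(x) − ∂/∂x^β( H(q(x),p(x)) ) = − (∂H/∂x^β)(q(x),p(x)). -/
open scoped BigOperators

noncomputable section

/-- The mixed Jacobian determinant
`∂(q^{μ₁},…,q^{μ_{α−1}}, p_{μ₁…μₙ}, q^{μ_{α+1}},…,q^{μₙ})/∂(x¹,…,xⁿ)`. -/
def jacMixed (n k : ℕ) (q : (Fin n → ℝ) → (Fin (n + k) → ℝ))
    (p : (Fin n → ℝ) → (MultiIdx (n + k) n → ℝ)) (s : MultiIdx (n + k) n) (α : Fin n)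
    (x : Fin n → ℝ) : ℝ :=
  Matrix.det (Matrix.of fun a b : Fin n =>
    if a = α then fderiv ℝ (fun x' => p x' s) x (Pi.single b 1)
    else fderiv ℝ (fun x' => q x' (midx s a)) x (Pi.single b 1))


/-- Smoothness of the determinant as a function of the matrix entries. -/
lemma contDiff_det_aux {m : Type*} [DecidableEq m] [Fintype m] :
    ContDiff ℝ (⊤ : ℕ∞) fun M : m → m → ℝ => (Matrix.of M).det := by
  simp_rw [Matrix.det_apply', Matrix.of_apply]
  apply ContDiff.sum
  intro σ _
  exact contDiff_const.mul (contDiff_prod fun i _ =>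
    (contDiff_apply ℝ ℝ i).comp (contDiff_apply ℝ (m → ℝ) (σ i)))

/-- Cramer-type identity. -/
lemma cramer_row_aux {n : ℕ} (A : Matrix (Fin n) (Fin n) ℝ) (g : Fin n → ℝ) (β : Fin n) :
    ∑ α, A α β * (A.updateRow α g).det = A.det * g β := by
  have h := congrFun (Matrix.mulVec_cramer A.transpose g) β
  simp only [Matrix.mulVec, dotProduct, Matrix.cramer_transpose_apply,
    Matrix.transpose_apply, Pi.smul_apply, Matrix.det_transpose, smul_eq_mul] at h
  exact h

/-- Decomposition of a continuous linear functional on a product of pi types. -/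
lemma clm_decomp_aux {ι κ : Type*} [Fintype ι] [Fintype κ] [DecidableEq ι] [DecidableEq κ]
    (T : ((ι → ℝ) × (κ → ℝ)) →L[ℝ] ℝ) (a : ι → ℝ) (b : κ → ℝ) :
    T (a, b) = (∑ i, a i * T (Pi.single i 1, 0)) + ∑ j, b j * T (0, Pi.single j 1) := by
  have ha : (a, b) = ((∑ i, a i • (Pi.single i 1 : ι → ℝ), (0 : κ → ℝ)) : (ι → ℝ) × (κ → ℝ))
      + (0, ∑ j, b j • (Pi.single j 1 : κ → ℝ)) := by
    ext t
    · simp [Finset.sum_apply, Pi.single_apply, mul_ite]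
    · simp [Finset.sum_apply, Pi.single_apply, mul_ite]
  rw [ha, map_add]
  congr 1
  · rw [show ((∑ i, a i • (Pi.single i 1 : ι → ℝ), (0 : κ → ℝ)) : (ι → ℝ) × (κ → ℝ))
        = ∑ i, a i • ((Pi.single i 1 : ι → ℝ), (0 : κ → ℝ)) by
      rw [Prod.ext_iff]; simp [Prod.fst_sum, Prod.snd_sum]]
    rw [map_sum]
    exact Finset.sum_congr rfl fun i _ => by rw [map_smul, smul_eq_mul]
  · rw [show (((0 : ι → ℝ), ∑ j, b j • (Pi.single j 1 : κ → ℝ)) : (ι → ℝ) × (κ → ℝ))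
        = ∑ j, b j • (((0 : ι → ℝ), Pi.single j 1) : (ι → ℝ) × (κ → ℝ)) by
      rw [Prod.ext_iff]; simp [Prod.fst_sum, Prod.snd_sum]]
    rw [map_sum]
    exact Finset.sum_congr rfl fun j _ => by rw [map_smul, smul_eq_mul]

/-- Smoothness of `W` in all its arguments. -/
lemma contDiff_Wfun_aux (n k : ℕ) (L : (Fin (n + k) → ℝ) → (Fin k → Fin n → ℝ) → ℝ)
    (hL : ContDiff ℝ (⊤ : ℕ∞) fun qv : (Fin (n + k) → ℝ) × (Fin k → Fin n → ℝ) => L qv.1 qv.2) :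
    ContDiff ℝ (⊤ : ℕ∞) fun t : (Fin (n + k) → ℝ) × (Fin k → Fin n → ℝ) × (MultiIdx (n + k) n → ℝ) =>
      Wfun n k L t.1 t.2.1 t.2.2 := by
  unfold Wfun pairing
  apply ContDiff.sub
  · apply ContDiff.sum; intro s _
    apply ContDiff.mul
    · exact (contDiff_apply ℝ ℝ s).comp (contDiff_snd.comp contDiff_snd)
    · refine contDiff_det_aux.comp ?_
      refine contDiff_pi.2 fun a => contDiff_pi.2 fun b => ?_
      unfold zcol
      refine Fin.addCases (motive := fun μ => ContDiff ℝ (⊤ : ℕ∞) fun t :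
          (Fin (n + k) → ℝ) × (Fin k → Fin n → ℝ) × (MultiIdx (n + k) n → ℝ) =>
          Fin.append (Pi.single b 1) (fun i => t.2.1 i b) μ) ?_ ?_ (midx s a)
      · intro γ; simp only [Fin.append_left]; exact contDiff_const
      · intro i; simp only [Fin.append_right]
        exact (contDiff_apply_apply ℝ ℝ i b).comp (contDiff_fst.comp contDiff_snd)
  · exact hL.comp (contDiff_fst.prodMk (contDiff_fst.comp contDiff_snd))

set_option maxHeartbeats 2000000 in
/-- Along a smooth solution of the generalized Hamilton equations arising from
a Legendre-correspondent critical point, the additional equations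
`Σ_α Σ_{μ₁<…<μₙ, μ_α = β} ∂(q^{μ₁},…,p_{μ₁…μₙ},…,q^{μₙ})/∂(x¹,…,xⁿ) − ∂/∂x^β(H(q,p))
  = −∂H/∂x^β(q,p)` hold for every `β = 1,…,n`. -/
theorem stmt6 (n k : ℕ) (hn : 1 ≤ n) (hk : 1 ≤ k)
    (L : (Fin (n + k) → ℝ) → (Fin k → Fin n → ℝ) → ℝ)
    (hL : ContDiff ℝ (⊤ : ℕ∞) fun qv : (Fin (n + k) → ℝ) × (Fin k → Fin n → ℝ) => L qv.1 qv.2)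
    -- generalized Legendre condition
    (O : Set (Phase n k)) (hO : IsOpen O) (hOne : O.Nonempty)
    (V : Phase n k → (Fin k → Fin n → ℝ)) (hV : ContDiffOn ℝ (⊤ : ℕ∞) V O)
    (hcrit : ∀ m ∈ O, ∀ (i : Fin k) (α : Fin n),
      fderiv ℝ (fun v => Wfun n k L m.1 v m.2) (V m) (Pi.single i (Pi.single α 1)) = 0)
    (huniq : ∀ m ∈ O, ∀ v : Fin k → Fin n → ℝ,
      (∀ (i : Fin k) (α : Fin n),
        fderiv ℝ (fun v' => Wfun n k L m.1 v' m.2) v (Pi.single i (Pi.single α 1)) = 0) →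
      v = V m)
    -- the Hamiltonian
    (H : Phase n k → ℝ) (hH : ∀ m, H m = Wfun n k L m.1 (V m) m.2)
    -- a smooth map x ↦ (q(x),p(x)) into O, arising from a Legendre-correspondent critical
    -- point of the Lagrangian
    (u : (Fin n → ℝ) → (Fin k → ℝ)) (hu : ContDiff ℝ (⊤ : ℕ∞) u)
    (q : (Fin n → ℝ) → (Fin (n + k) → ℝ)) (hqdef : ∀ x, q x = Fin.append x (u x))
    (p : (Fin n → ℝ) → (MultiIdx (n + k) n → ℝ)) (hp : ContDiff ℝ (⊤ : ℕ∞) p)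
    (hrange : ∀ x, (q x, p x) ∈ O)
    (w : (Fin n → ℝ) → ℝ) (hw : ∀ x, Wfun n k L (q x) (jac u x) (p x) = w x)
    (hcorr : ∀ x, ∀ (i : Fin k) (α : Fin n),
      fderiv ℝ (fun v' => Wfun n k L (q x) v' (p x)) (jac u x)
        (Pi.single i (Pi.single α 1)) = 0)
    -- the generalized Hamilton equations
    (hHam1 : ∀ x, ∀ s : MultiIdx (n + k) n,
      jacMinor n k q s x
        = fderiv ℝ H (q x, p x)
            ((0 : Fin (n + k) → ℝ), (Pi.single s 1 : MultiIdx (n + k) n → ℝ)))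
    (hHam2 : ∀ (x : Fin n → ℝ) (i : Fin k),
      (∑ α : Fin n, ∑ s : MultiIdx (n + k) n,
          if midx s α = Fin.natAdd n i then jacMixed n k q p s α x else 0)
        = - fderiv ℝ H (q x, p x)
            ((Pi.single (Fin.natAdd n i) 1 : Fin (n + k) → ℝ),
              (0 : MultiIdx (n + k) n → ℝ))) :
    ∀ (x : Fin n → ℝ) (β : Fin n),
      (∑ α : Fin n, ∑ s : MultiIdx (n + k) n,
          if midx s α = Fin.castAdd k β then jacMixed n k q p s α x else 0)
        - fderiv ℝ (fun x' => H (q x', p x')) x (Pi.single β 1)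
      = - fderiv ℝ H (q x, p x)
          ((Pi.single (Fin.castAdd k β) 1 : Fin (n + k) → ℝ),
            (0 : MultiIdx (n + k) n → ℝ)) := by
  intro x β
  have hq : q = fun x' => Fin.append x' (u x') := funext hqdef
  subst hq
  beta_reduce at hHam1 hHam2 ⊢
  -- basic differentiability facts
  have hdu : ∀ i : Fin k, DifferentiableAt ℝ (fun x' => u x' i) x :=
    fun i => (((contDiff_apply ℝ ℝ i).comp hu).differentiable (by simp)) x
  have hdqc : ∀ μ : Fin (n + k),
      DifferentiableAt ℝ (fun x' => Fin.append x' (u x') μ) x := by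
    intro μ
    refine Fin.addCases (motive := fun μ =>
      DifferentiableAt ℝ (fun x' => Fin.append x' (u x') μ) x) ?_ ?_ μ
    · intro γ
      simp only [Fin.append_left]
      exact (ContinuousLinearMap.proj γ : (Fin n → ℝ) →L[ℝ] ℝ).differentiableAt
    · intro i
      simp only [Fin.append_right]
      exact hdu i
  have hdq : DifferentiableAt ℝ (fun x' => Fin.append x' (u x')) x :=
    differentiableAt_pi.2 hdqc
  have hdp : DifferentiableAt ℝ p x := (hp.differentiable (by simp)) x
  have hdpc : ∀ s : MultiIdx (n + k) n, DifferentiableAt ℝ (fun x' => p x' s) x :=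
    fun s => (((contDiff_apply ℝ ℝ s).comp hp).differentiable (by simp)) x
  have hmO : (Fin.append x (u x), p x) ∈ O := by
    have := hrange x; simpa using this
  -- differentiability of H at the point
  have hHd : DifferentiableAt ℝ H (Fin.append x (u x), p x) := by
    have hVd : DifferentiableAt ℝ V (Fin.append x (u x), p x) :=
      (hV.contDiffAt (hO.mem_nhds hmO)).differentiableAt (by simp)
    have hHe : H = fun m' => Wfun n k L m'.1 (V m') m'.2 := funext hH
    rw [hHe]
    exact (((contDiff_Wfun_aux n k L hL).differentiable (by simp)).differentiableAt).comp _
      (differentiableAt_fst.prodMk (hVd.prodMk differentiableAt_snd))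
  -- abbreviations
  set dH : Phase n k →L[ℝ] ℝ := fderiv ℝ H (Fin.append x (u x), p x) with hdHdef
  -- chain rule
  have hF : DifferentiableAt ℝ (fun x' => (Fin.append x' (u x'), p x')) x := hdq.prodMk hdp
  have hchain : fderiv ℝ (fun x' => H (Fin.append x' (u x'), p x')) x (Pi.single β 1)
      = dH (fderiv ℝ (fun x' => Fin.append x' (u x')) x (Pi.single β 1),
            fderiv ℝ p x (Pi.single β 1)) := by
    have h1 : (fun x' => H (Fin.append x' (u x'), p x'))
        = H ∘ (fun x' => (Fin.append x' (u x'), p x')) := rfl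
    rw [h1, fderiv_comp x hHd hF, ContinuousLinearMap.comp_apply,
      DifferentiableAt.fderiv_prodMk hdq hdp, ContinuousLinearMap.prod_apply]
  -- components of the derivative vectors
  have ha : ∀ μ, fderiv ℝ (fun x' => Fin.append x' (u x')) x (Pi.single β 1) μ
      = fderiv ℝ (fun x' => Fin.append x' (u x') μ) x (Pi.single β 1) := by
    intro μ
    rw [fderiv_pi hdqc]
    rfl
  have hb : ∀ s, fderiv ℝ p x (Pi.single β 1) s
      = fderiv ℝ (fun x' => p x' s) x (Pi.single β 1) := by
    intro s
    rw [fderiv_pi hdpc]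
    rfl
  have hvec : (fderiv ℝ (fun x' => Fin.append x' (u x')) x (Pi.single β 1),
      fderiv ℝ p x (Pi.single β 1))
      = ((fun μ => fderiv ℝ (fun x' => Fin.append x' (u x') μ) x (Pi.single β 1)),
         (fun s => fderiv ℝ (fun x' => p x' s) x (Pi.single β 1))) := by
    refine Prod.ext ?_ ?_
    · funext μ; exact ha μ
    · funext s; exact hb s
  -- decompose dH applied to the derivative vector
  have hdecomp := clm_decomp_aux dH
    (fun μ => fderiv ℝ (fun x' => Fin.append x' (u x') μ) x (Pi.single β 1))
    (fun s => fderiv ℝ (fun x' => p x' s) x (Pi.single β 1))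
  -- special values of the q-components
  have hacast : ∀ γ : Fin n,
      fderiv ℝ (fun x' => Fin.append x' (u x') (Fin.castAdd k γ)) x (Pi.single β 1)
        = (Pi.single β 1 : Fin n → ℝ) γ := by
    intro γ
    simp only [Fin.append_left]
    rw [show (fun x' : Fin n → ℝ => x' γ)
        = (ContinuousLinearMap.proj γ : (Fin n → ℝ) →L[ℝ] ℝ) from rfl,
      ContinuousLinearMap.fderiv]
    rfl
  have hanat : ∀ i : Fin k,
      fderiv ℝ (fun x' => Fin.append x' (u x') (Fin.natAdd n i)) x (Pi.single β 1)
        = jac u x i β := by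
    intro i
    simp only [Fin.append_right]
    rfl
  -- the full derivative of x' ↦ H(q(x'),p(x'))
  have hdF : fderiv ℝ (fun x' => H (Fin.append x' (u x'), p x')) x (Pi.single β 1)
      = dH (Pi.single (Fin.castAdd k β) 1, 0)
        + (∑ i : Fin k, jac u x i β * dH (Pi.single (Fin.natAdd n i) 1, 0))
        + ∑ s : MultiIdx (n + k) n,
            fderiv ℝ (fun x' => p x' s) x (Pi.single β 1)
              * jacMinor n k (fun x' => Fin.append x' (u x')) s x := by
    rw [hchain, hvec, hdecomp, Fin.sum_univ_add]
    have h1 : ∑ γ : Fin n,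
        fderiv ℝ (fun x' => Fin.append x' (u x') (Fin.castAdd k γ)) x (Pi.single β 1)
          * dH (Pi.single (Fin.castAdd k γ) 1, 0)
        = dH (Pi.single (Fin.castAdd k β) 1, 0) := by
      rw [Finset.sum_eq_single β]
      · rw [hacast]; simp
      · intro γ _ hγ
        rw [hacast]
        simp [Pi.single_apply, hγ]
      · simp
    have h2 : ∀ i : Fin k,
        fderiv ℝ (fun x' => Fin.append x' (u x') (Fin.natAdd n i)) x (Pi.single β 1)
          * dH (Pi.single (Fin.natAdd n i) 1, 0)
        = jac u x i β * dH (Pi.single (Fin.natAdd n i) 1, 0) := by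
      intro i; rw [hanat]
    have h3 : ∀ s : MultiIdx (n + k) n,
        fderiv ℝ (fun x' => p x' s) x (Pi.single β 1) * dH (0, Pi.single s 1)
        = fderiv ℝ (fun x' => p x' s) x (Pi.single β 1)
            * jacMinor n k (fun x' => Fin.append x' (u x')) s x := by
      intro s; rw [hHam1 x s]
    rw [h1]
    rw [Finset.sum_congr rfl fun i _ => h2 i, Finset.sum_congr rfl fun s _ => h3 s]
  -- Cramer identity per multi-index
  have hcram : ∀ s : MultiIdx (n + k) n,
      (∑ α : Fin n,
        fderiv ℝ (fun x' => Fin.append x' (u x') (midx s α)) x (Pi.single β 1)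
          * jacMixed n k (fun x' => Fin.append x' (u x')) p s α x)
      = fderiv ℝ (fun x' => p x' s) x (Pi.single β 1)
          * jacMinor n k (fun x' => Fin.append x' (u x')) s x := by
    intro s
    set A : Matrix (Fin n) (Fin n) ℝ := Matrix.of fun a b : Fin n =>
      fderiv ℝ (fun x' => Fin.append x' (u x') (midx s a)) x (Pi.single b 1) with hA
    set g : Fin n → ℝ := fun b =>
      fderiv ℝ (fun x' => p x' s) x (Pi.single b 1) with hg
    have hmix : ∀ α : Fin n, jacMixed n k (fun x' => Fin.append x' (u x')) p s α x
        = (A.updateRow α g).det := by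
      intro α
      unfold jacMixed
      congr 1
      ext a b
      rw [Matrix.updateRow_apply, Matrix.of_apply]
      split_ifs <;> rfl
    have h := cramer_row_aux A g β
    calc (∑ α : Fin n,
          fderiv ℝ (fun x' => Fin.append x' (u x') (midx s α)) x (Pi.single β 1)
            * jacMixed n k (fun x' => Fin.append x' (u x')) p s α x)
        = ∑ α : Fin n, A α β * (A.updateRow α g).det := by
          refine Finset.sum_congr rfl fun α _ => ?_
          rw [hmix α]
          rfl
      _ = A.det * g β := h
      _ = fderiv ℝ (fun x' => p x' s) x (Pi.single β 1)
            * jacMinor n k (fun x' => Fin.append x' (u x')) s x := by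
          rw [mul_comm]
          rfl
  -- redistribute the Cramer sums according to the coordinate split
  have hsplit : (∑ s : MultiIdx (n + k) n, ∑ α : Fin n,
        fderiv ℝ (fun x' => Fin.append x' (u x') (midx s α)) x (Pi.single β 1)
          * jacMixed n k (fun x' => Fin.append x' (u x')) p s α x)
      = (∑ α : Fin n, ∑ s : MultiIdx (n + k) n,
            if midx s α = Fin.castAdd k β
            then jacMixed n k (fun x' => Fin.append x' (u x')) p s α x else 0)
        + ∑ i : Fin k, jac u x i β * (∑ α : Fin n, ∑ s : MultiIdx (n + k) n,
            if midx s α = Fin.natAdd n i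
            then jacMixed n k (fun x' => Fin.append x' (u x')) p s α x else 0) := by
    have step1 : ∀ (s : MultiIdx (n + k) n) (α : Fin n),
        fderiv ℝ (fun x' => Fin.append x' (u x') (midx s α)) x (Pi.single β 1)
          * jacMixed n k (fun x' => Fin.append x' (u x')) p s α x
        = ∑ μ : Fin (n + k), if midx s α = μ then
            fderiv ℝ (fun x' => Fin.append x' (u x') μ) x (Pi.single β 1)
              * jacMixed n k (fun x' => Fin.append x' (u x')) p s α x else 0 := by
      intro s α
      rw [Finset.sum_ite_eq]
      simp
    calc (∑ s : MultiIdx (n + k) n, ∑ α : Fin n,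
          fderiv ℝ (fun x' => Fin.append x' (u x') (midx s α)) x (Pi.single β 1)
            * jacMixed n k (fun x' => Fin.append x' (u x')) p s α x)
        = ∑ s : MultiIdx (n + k) n, ∑ α : Fin n, ∑ μ : Fin (n + k),
            (if midx s α = μ then
              fderiv ℝ (fun x' => Fin.append x' (u x') μ) x (Pi.single β 1)
                * jacMixed n k (fun x' => Fin.append x' (u x')) p s α x else 0) :=
          Finset.sum_congr rfl fun s _ => Finset.sum_congr rfl fun α _ => step1 s α
      _ = ∑ α : Fin n, ∑ s : MultiIdx (n + k) n, ∑ μ : Fin (n + k),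
            (if midx s α = μ then
              fderiv ℝ (fun x' => Fin.append x' (u x') μ) x (Pi.single β 1)
                * jacMixed n k (fun x' => Fin.append x' (u x')) p s α x else 0) :=
          Finset.sum_comm
      _ = ∑ α : Fin n, ∑ μ : Fin (n + k), ∑ s : MultiIdx (n + k) n,
            (if midx s α = μ then
              fderiv ℝ (fun x' => Fin.append x' (u x') μ) x (Pi.single β 1)
                * jacMixed n k (fun x' => Fin.append x' (u x')) p s α x else 0) :=
          Finset.sum_congr rfl fun α _ => Finset.sum_comm
      _ = ∑ μ : Fin (n + k), ∑ α : Fin n, ∑ s : MultiIdx (n + k) n,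
            (if midx s α = μ then
              fderiv ℝ (fun x' => Fin.append x' (u x') μ) x (Pi.single β 1)
                * jacMixed n k (fun x' => Fin.append x' (u x')) p s α x else 0) :=
          Finset.sum_comm
      _ = (∑ α : Fin n, ∑ s : MultiIdx (n + k) n,
            if midx s α = Fin.castAdd k β
            then jacMixed n k (fun x' => Fin.append x' (u x')) p s α x else 0)
          + ∑ i : Fin k, jac u x i β * (∑ α : Fin n, ∑ s : MultiIdx (n + k) n,
            if midx s α = Fin.natAdd n i
            then jacMixed n k (fun x' => Fin.append x' (u x')) p s α x else 0) := by
          rw [Fin.sum_univ_add]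
          congr 1
          · -- castAdd part
            rw [show (∑ γ : Fin n, ∑ α : Fin n, ∑ s : MultiIdx (n + k) n,
                (if midx s α = Fin.castAdd k γ then
                  fderiv ℝ (fun x' => Fin.append x' (u x') (Fin.castAdd k γ)) x
                      (Pi.single β 1)
                    * jacMixed n k (fun x' => Fin.append x' (u x')) p s α x else 0))
                = ∑ α : Fin n, ∑ s : MultiIdx (n + k) n, ∑ γ : Fin n,
                (if midx s α = Fin.castAdd k γ then
                  fderiv ℝ (fun x' => Fin.append x' (u x') (Fin.castAdd k γ)) x
                      (Pi.single β 1)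
                    * jacMixed n k (fun x' => Fin.append x' (u x')) p s α x else 0) from
              (Finset.sum_comm).trans
                (Finset.sum_congr rfl fun α _ => Finset.sum_comm)]
            refine Finset.sum_congr rfl fun α _ => Finset.sum_congr rfl fun s _ => ?_
            rw [Finset.sum_eq_single β]
            · rw [hacast]
              simp
            · intro γ _ hγ
              rw [hacast]
              simp [Pi.single_apply, hγ]
            · simp
          · -- natAdd part
            refine Finset.sum_congr rfl fun i _ => ?_
            rw [Finset.mul_sum]
            refine Finset.sum_congr rfl fun α _ => ?_
            rw [Finset.mul_sum]
            refine Finset.sum_congr rfl fun s _ => ?_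
            rw [hanat]
            split_ifs <;> simp
  -- combine Cramer identities
  have hKK : (∑ α : Fin n, ∑ s : MultiIdx (n + k) n,
        if midx s α = Fin.castAdd k β
        then jacMixed n k (fun x' => Fin.append x' (u x')) p s α x else 0)
      + (∑ i : Fin k, jac u x i β * (∑ α : Fin n, ∑ s : MultiIdx (n + k) n,
          if midx s α = Fin.natAdd n i
          then jacMixed n k (fun x' => Fin.append x' (u x')) p s α x else 0))
      = ∑ s : MultiIdx (n + k) n,
          fderiv ℝ (fun x' => p x' s) x (Pi.single β 1)
            * jacMinor n k (fun x' => Fin.append x' (u x')) s x := by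
    rw [← hsplit]
    exact Finset.sum_congr rfl fun s _ => hcram s
  -- use the second Hamilton equation
  have h4 : (∑ i : Fin k, jac u x i β * (∑ α : Fin n, ∑ s : MultiIdx (n + k) n,
        if midx s α = Fin.natAdd n i
        then jacMixed n k (fun x' => Fin.append x' (u x')) p s α x else 0))
      = - ∑ i : Fin k, jac u x i β * dH (Pi.single (Fin.natAdd n i) 1, 0) := by
    rw [← Finset.sum_neg_distrib]
    refine Finset.sum_congr rfl fun i _ => ?_
    rw [hHam2 x i, mul_neg]
  rw [hdF]
  linarith [hKK, h4]
end
end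

section
/- Let X = X₁ ∧ … ∧ Xₙ ∈ ΛⁿT_{(q,p)}M be a decomposable n-vector such that dx^β(X_α) = δ^β_α for all 1 ≤ α, β ≤ n. If X is H-Hamiltonian, i.e. (−1)ⁿ X ⨼ Ω = dH modulo the ideal ℐ spanned by dx¹,…,dxⁿ, then the exact identity holds: (−1)ⁿ X ⨼ Ω = dH − Σ_{α=1}^{n} dH(X_α) dx^α as covectors at (q,p). -/
open scoped BigOperators

noncomputable section

/-- Evaluation of the Cartan–Poincaré form `θ = Σ_{μ₁<…<μₙ} p_{μ₁…μₙ} dq^{μ₁}∧…∧dq^{μₙ}`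
on an `n`-tuple of tangent vectors of `M`. -/
def thetaEval (n k : ℕ) (m : Phase n k) (w : Fin n → Phase n k) : ℝ :=
  ∑ s : MultiIdx (n + k) n,
    m.2 s * Matrix.det (Matrix.of fun a b : Fin n => (w b).1 (midx s a))

/-- Evaluation of the pataplectic form
`Ω = dθ = Σ_{μ₁<…<μₙ} dp_{μ₁…μₙ} ∧ dq^{μ₁}∧…∧dq^{μₙ}` on an `(n+1)`-tuple of tangent
vectors of `M` (each summand is the determinant of the matrix of the coordinates
`(p_{μ₁…μₙ}, q^{μ₁}, …, q^{μₙ})` of the `n+1` vectors). -/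
def OmegaEval (n k : ℕ) (w : Fin (n + 1) → Phase n k) : ℝ :=
  ∑ s : MultiIdx (n + k) n,
    Matrix.det (Matrix.of fun a b : Fin (n + 1) =>
      (Fin.cons ((w b).2 s) (fun j : Fin n => (w b).1 (midx s j)) : Fin (n+1) → ℝ) a)

/-- Evaluation of the volume form `ω = dx¹ ∧ … ∧ dxⁿ` on tangent vectors of `M`. -/
def volEval (n k : ℕ) (w : Fin n → Phase n k) : ℝ :=
  Matrix.det (Matrix.of fun a b : Fin n => (w b).1 (Fin.castAdd k a))

/-- Evaluation formula for the exterior differential of a `p`-form `φ` (given by its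
evaluation function):
`dφ(x)(w₀,…,w_p) = Σ_i (−1)^i (∂_{w_i} φ)(x)(w₀,…,ŵ_i,…,w_p)`. -/
def dEval {E : Type*} [NormedAddCommGroup E] [NormedSpace ℝ E] {p : ℕ}
    (φ : E → (Fin p → E) → ℝ) (m : E) (w : Fin (p + 1) → E) : ℝ :=
  ∑ i : Fin (p + 1), (-1 : ℝ) ^ (i : ℕ) *
    fderiv ℝ (fun m' => φ m' (w ∘ i.succAbove)) m (w i)

/-- If `X = X₁ ∧ … ∧ Xₙ` is a decomposable `n`-vector at `(q,p)` with
`dx^β(X_α) = δ^β_α`, and `X` is `H`-Hamiltonian, i.e. `(−1)ⁿ X ⨼ Ω = dH mod ℐ` where `ℐ` is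
the ideal spanned by `dx¹,…,dxⁿ`, then
`(−1)ⁿ X ⨼ Ω = dH − Σ_α dH(X_α) dx^α` exactly. -/
theorem stmt7 (n k : ℕ)
    (H : Phase n k → ℝ) (m : Phase n k)
    -- H is a smooth function on an open subset of M containing m
    (hH : ∃ U : Set (Phase n k), IsOpen U ∧ m ∈ U ∧ ContDiffOn ℝ (⊤ : ℕ∞) H U)
    (X : Fin n → Phase n k)
    (hX : ∀ α β : Fin n, (X α).1 (Fin.castAdd k β) = if β = α then 1 else 0)
    (hHam : ∃ c : Fin n → ℝ, ∀ V : Phase n k,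
      (-1 : ℝ) ^ n * OmegaEval n k (Fin.snoc X V)
        = fderiv ℝ H m V + ∑ β : Fin n, c β * V.1 (Fin.castAdd k β)) :
    ∀ V : Phase n k,
      (-1 : ℝ) ^ n * OmegaEval n k (Fin.snoc X V)
        = fderiv ℝ H m V - ∑ α : Fin n, fderiv ℝ H m (X α) * V.1 (Fin.castAdd k α) := by
  obtain ⟨c, hc⟩ := hHam
  have hzero : ∀ α : Fin n, OmegaEval n k (Fin.snoc X (X α)) = 0 := by
    intro α
    unfold OmegaEval
    refine Finset.sum_eq_zero fun s _ => ?_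
    apply Matrix.det_zero_of_column_eq (i := Fin.castSucc α) (j := Fin.last n)
    · exact (Fin.castSucc_lt_last α).ne
    · intro a
      simp [Fin.snoc_castSucc, Fin.snoc_last]
  have hcα : ∀ α : Fin n, c α = - fderiv ℝ H m (X α) := by
    intro α
    have := hc (X α)
    rw [hzero α, mul_zero] at this
    have hs : ∑ β : Fin n, c β * (X α).1 (Fin.castAdd k β) = c α := by
      rw [Finset.sum_eq_single α]
      · rw [hX α α]; simp
      · intro b _ hb; rw [hX α b]; simp [hb]
      · simp
    rw [hs] at this
    linarith
  intro V
  rw [hc V, sub_eq_add_neg, ← Finset.sum_neg_distrib]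
  congr 1
  refine Finset.sum_congr rfl fun α _ => ?_
  rw [hcα α]; ring
end
end

section
/- Let Γ ⊂ M be the graph of a solution of the generalized Hamilton equations, parametrized by U : x ↦ (x, u(x), p(x)). Then for every (n−1)-form a ∈ 𝔓^{n−1}M, the differential of a along Γ equals the external 𝔭-bracket with Hω: da|_Γ = {Hω, a}|_Γ, where {Hω, a} := −Ξ(a) ⨼ d(Hω). Equivalently, for every open subset D ⊆ Γ with smooth boundary, ∫_D {Hω, a} = ∫_{∂D} a. -/
open scoped BigOperators

noncomputable section

/-- Reduction of an alternating `n`-form evaluated on the images under a linear map `T`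
of `n` vectors of `ℝⁿ` to its value on the image of the standard basis. -/
lemma alt_det_reduce {E : Type*} [AddCommGroup E] [Module ℝ E] {n : ℕ}
    (g : E [⋀^Fin n]→ₗ[ℝ] ℝ) (T : (Fin n → ℝ) →ₗ[ℝ] E) (v : Fin n → Fin n → ℝ) :
    g (fun j => T (v j)) =
      (Matrix.of fun j β : Fin n => v j β).det * g (fun β => T (Pi.single β 1)) := by
  have h := (g.compLinearMap T).eq_smul_basis_det (Pi.basisFun ℝ (Fin n))
  have h2 : (g.compLinearMap T) v
      = ((g.compLinearMap T) (Pi.basisFun ℝ (Fin n)) • (Pi.basisFun ℝ (Fin n)).det) v := by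
    rw [← h]
  simp only [AlternatingMap.compLinearMap_apply, AlternatingMap.smul_apply, smul_eq_mul,
    Pi.basisFun_det, Pi.basisFun_apply] at h2
  rw [h2, mul_comm]
  rfl

/-- Laplace-expansion/Cramer identity. -/
lemma cramer_aux {n : ℕ} (ξx : Fin (n + 1) → ℝ) (v : Fin (n + 1) → Fin (n + 1) → ℝ)
    (β : Fin (n + 1)) :
    ∑ j : Fin (n + 1), (-1 : ℝ) ^ (j : ℕ) * v j β *
        (Matrix.of fun γ b : Fin (n + 1) =>
          (Fin.cons ξx v : Fin (n+2) → Fin (n+1) → ℝ) (Fin.succAbove j.succ b) γ).det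
      = ξx β * (Matrix.of fun j γ : Fin (n + 1) => v j γ).det := by
  set κ : Fin (n + 2) → Fin (n + 1) → ℝ := (Fin.cons ξx v : Fin (n+2) → Fin (n+1) → ℝ) with hκ
  set C : Matrix (Fin (n + 2)) (Fin (n + 2)) ℝ :=
    Matrix.of fun r c => κ c (Fin.cases β (fun j => j) r) with hC
  have hC0 : C.det = 0 := by
    apply Matrix.det_zero_of_row_eq (i := 0) (j := β.succ) (Fin.succ_ne_zero β).symm
    funext c
    simp [hC]
  have hL := Matrix.det_succ_row_zero C
  rw [Fin.sum_univ_succ] at hL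
  have h00 : C 0 0 = ξx β := rfl
  have hmin0 : C.submatrix Fin.succ (Fin.succAbove 0) =
      Matrix.of fun r b : Fin (n + 1) => v b r := by
    ext r b
    simp [hC, hκ, Fin.succAbove_zero]
  have hminS : ∀ j : Fin (n + 1), C.submatrix Fin.succ (Fin.succAbove j.succ) =
      Matrix.of fun γ b : Fin (n + 1) => κ (Fin.succAbove j.succ b) γ := by
    intro j
    ext r b
    simp [hC]
  have hrow : ∀ j : Fin (n + 1), C 0 j.succ = v j β := fun j => rfl
  rw [h00, hmin0, hC0] at hL
  simp only [hrow, hminS] at hL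
  have hT : (Matrix.of fun r b : Fin (n + 1) => v b r).det
      = (Matrix.of fun j γ : Fin (n + 1) => v j γ).det := by
    rw [← Matrix.det_transpose]
    congr 1
  rw [hT] at hL
  simp only [Fin.val_zero, pow_zero, one_mul, Fin.val_succ, pow_succ] at hL
  have h' : ∀ j : Fin (n+1), (-1 : ℝ) ^ (j : ℕ) * (-1) * v j β *
      (Matrix.of fun γ b : Fin (n + 1) => κ (Fin.succAbove j.succ b) γ).det
      = -((-1 : ℝ) ^ (j : ℕ) * v j β *
      (Matrix.of fun γ b : Fin (n + 1) => κ (Fin.succAbove j.succ b) γ).det) := by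
    intro j; ring
  rw [Finset.sum_congr rfl (fun j _ => h' j), Finset.sum_neg_distrib] at hL
  linarith

/-- The coordinate map `m ↦ (p_s(m), q^{μ₁}(m), …, q^{μₙ}(m))`, as a linear map. -/
def Lmap (n k : ℕ) (s : MultiIdx (n + k) n) : Phase n k →ₗ[ℝ] (Fin (n + 1) → ℝ) where
  toFun m := (Fin.cons (m.2 s) fun j => m.1 (midx s j) : Fin (n+1) → ℝ)
  map_add' m m' := by
    funext i
    refine Fin.cases ?_ (fun j => ?_) i <;> simp
  map_smul' r m := by
    funext i
    refine Fin.cases ?_ (fun j => ?_) i <;> simp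

/-- The `s`-summand of the pataplectic form `Ω`, as an alternating map. -/
def OmegaAltS (n k : ℕ) (s : MultiIdx (n + k) n) :
    (Phase n k) [⋀^Fin (n + 1)]→ₗ[ℝ] ℝ :=
  (Matrix.detRowAlternating).compLinearMap (Lmap n k s)

lemma OmegaEval_eq (n k : ℕ) (w : Fin (n + 1) → Phase n k) :
    OmegaEval n k w = ∑ s : MultiIdx (n + k) n, OmegaAltS n k s w := by
  refine Finset.sum_congr rfl fun s _ => ?_
  rw [OmegaAltS, AlternatingMap.compLinearMap_apply]
  show _ = (Matrix.of fun b : Fin (n+1) => Lmap n k s (w b)).det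
  rw [← Matrix.det_transpose]
  congr 1

lemma OmegaAltS_cons_reduce (n k : ℕ) (s : MultiIdx (n + k) n) (ξ : Phase n k)
    (T : (Fin n → ℝ) →ₗ[ℝ] Phase n k) (v : Fin n → Fin n → ℝ) :
    OmegaAltS n k s (Fin.cons ξ (fun j => T (v j))) =
      (Matrix.of fun j β : Fin n => v j β).det *
        OmegaAltS n k s (Fin.cons ξ (fun β => T (Pi.single β 1))) :=
  alt_det_reduce ((OmegaAltS n k s).curryLeft ξ) T v

lemma OmegaAltS_cons_snoc (n k : ℕ) (s : MultiIdx (n + k) n) (ξ : Phase n k)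
    (e : Fin n → Phase n k) :
    OmegaAltS n k s (Fin.cons ξ e) = (-1 : ℝ) ^ n * OmegaAltS n k s (Fin.snoc e ξ) := by
  have h1 : (Fin.snoc e ξ : Fin (n+1) → Phase n k) =
      (Fin.cons ξ e : Fin (n+1) → Phase n k) ∘ (finRotate (n+1)) := by
    rw [Fin.snoc_eq_cons_rotate]; rfl
  have h2 := (OmegaAltS n k s).map_perm (Fin.cons ξ e) (finRotate (n+1))
  rw [← h1, sign_finRotate] at h2
  rw [h2, Units.smul_def, zsmul_eq_mul]
  push_cast
  rw [← mul_assoc, ← pow_add]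
  have h3 : (-1 : ℝ) ^ (n + n) = 1 := by
    rw [← two_mul, pow_mul]; norm_num
  rw [h3, one_mul]

/-- Let `Γ` be the graph in `M` of a solution of the generalized Hamilton
equations, naturally parametrized by `U : x ↦ (x, u(x), p(x))` (the Hamilton equations are
expressed in the equivalent compact form
`(−1)ⁿ (∂U/∂x¹ ∧ … ∧ ∂U/∂xⁿ) ⨼ Ω = dH mod ℐ`).  Then for every `(n−1)`-form
`a ∈ 𝔓^{n−1}M` (with `da = −Ξ(a) ⨼ Ω`), the differential of `a` along `Γ` equals the
external 𝔭-bracket `{Hω, a} := −Ξ(a) ⨼ d(Hω)`, i.e. `da|_Γ = {Hω,a}|_Γ`.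
Here `n = d+1 ≥ 1`. -/
theorem stmt11 (d k : ℕ)
    (H : Phase (d + 1) k → ℝ) (hH : ContDiff ℝ (⊤ : ℕ∞) H)
    (u : (Fin (d + 1) → ℝ) → (Fin k → ℝ)) (hu : ContDiff ℝ (⊤ : ℕ∞) u)
    (p : (Fin (d + 1) → ℝ) → (MultiIdx (d + 1 + k) (d + 1) → ℝ)) (hp : ContDiff ℝ (⊤ : ℕ∞) p)
    -- the natural parametrization U(x) = (x, u(x), p(x)) of Γ
    (U : (Fin (d + 1) → ℝ) → Phase (d + 1) k)
    (hU : ∀ x, U x = (Fin.append x (u x), p x))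
    -- U is a solution of the generalized Hamilton equations:
    -- (−1)ⁿ (∂U/∂x¹ ∧ … ∧ ∂U/∂xⁿ) ⨼ Ω = dH mod ℐ
    (hHam : ∀ x : Fin (d + 1) → ℝ, ∃ c : Fin (d + 1) → ℝ, ∀ V : Phase (d + 1) k,
      (-1 : ℝ) ^ (d + 1) *
          OmegaEval (d + 1) k
            (Fin.snoc (fun α : Fin (d + 1) => fderiv ℝ U x (Pi.single α 1)) V)
        = fderiv ℝ H (U x) V + ∑ β : Fin (d + 1), c β * V.1 (Fin.castAdd k β))
    -- a ∈ 𝔓^{n−1}M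
    (a : Phase (d + 1) k → AlternatingMap ℝ (Phase (d + 1) k) ℝ (Fin d))
    (ha : ∀ v : Fin d → Phase (d + 1) k, ContDiff ℝ (⊤ : ℕ∞) fun m => a m v)
    (ξa : Phase (d + 1) k → Phase (d + 1) k) (hξa : ContDiff ℝ (⊤ : ℕ∞) ξa)
    (hdefa : ∀ (m : Phase (d + 1) k) (w : Fin (d + 1) → Phase (d + 1) k),
      dEval (fun m' v => a m' v) m w = - OmegaEval (d + 1) k (Fin.cons (ξa m) w)) :
    -- da|_Γ = {Hω, a}|_Γ
    ∀ (x : Fin (d + 1) → ℝ) (v : Fin (d + 1) → (Fin (d + 1) → ℝ)),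
      dEval (fun m' w => a m' w) (U x) (fun j => fderiv ℝ U x (v j))
        = - dEval (fun m' (w : Fin (d + 1) → Phase (d + 1) k) => H m' * volEval (d + 1) k w)
              (U x) (Fin.cons (ξa (U x)) (fun j => fderiv ℝ U x (v j))) := by
  intro x v
  classical
  obtain ⟨c, hc⟩ := hHam x
  -- differentiability of U
  have hU' : U = fun x => (Fin.append x (u x), p x) := funext hU
  have hUc : ContDiff ℝ (⊤ : ℕ∞) U := by
    rw [hU']
    refine ContDiff.prodMk ?_ hp
    refine contDiff_pi.2 fun μ => ?_
    refine Fin.addCases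
      (motive := fun μ => ContDiff ℝ (⊤ : ℕ∞) fun x : Fin (d+1) → ℝ => Fin.append x (u x) μ)
      ?_ ?_ μ
    · intro β
      simp only [Fin.append_left]
      exact (ContinuousLinearMap.proj β : ((Fin (d+1) → ℝ) →L[ℝ] ℝ)).contDiff
    · intro i
      simp only [Fin.append_right]
      exact ((ContinuousLinearMap.proj i : ((Fin k → ℝ) →L[ℝ] ℝ)).contDiff).comp hu
  have hUd : DifferentiableAt ℝ U x := (hUc.differentiable (by simp)) x
  set T : (Fin (d+1) → ℝ) →L[ℝ] Phase (d+1) k := fderiv ℝ U x with hT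
  -- projection to the `x`-coordinates of tangent vectors
  have hproj : ∀ (h : Fin (d+1) → ℝ) (β : Fin (d+1)), (T h).1 (Fin.castAdd k β) = h β := by
    intro h β
    set π : Phase (d+1) k →L[ℝ] ℝ :=
      (ContinuousLinearMap.proj (Fin.castAdd k β)).comp
        (ContinuousLinearMap.fst ℝ (Fin (d+1+k) → ℝ) (MultiIdx (d+1+k) (d+1) → ℝ)) with hπ
    have h2 : HasFDerivAt (fun y => π (U y)) (π.comp T) x :=
      (π.hasFDerivAt).comp x hUd.hasFDerivAt
    have h1 : (fun y => π (U y)) = fun y : Fin (d+1) → ℝ => y β := by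
      funext y
      show (U y).1 (Fin.castAdd k β) = y β
      rw [hU y]
      exact Fin.append_left _ _ _
    rw [h1] at h2
    have h4 : π.comp T = (ContinuousLinearMap.proj β : (Fin (d+1) → ℝ) →L[ℝ] ℝ) :=
      h2.unique ((ContinuousLinearMap.proj β :
        (Fin (d+1) → ℝ) →L[ℝ] ℝ)).hasFDerivAt
    calc (T h).1 (Fin.castAdd k β) = (π.comp T) h := rfl
    _ = h β := by rw [h4]; rfl
  set e : Fin (d+1) → Phase (d+1) k := fun α => T (Pi.single α 1) with he
  set ξ : Phase (d+1) k := ξa (U x) with hξ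
  set W : Fin (d+1) → Phase (d+1) k := fun j => T (v j) with hWdef
  set D : ℝ := (Matrix.of fun j β : Fin (d+1) => v j β).det with hD
  set dH : Phase (d+1) k →L[ℝ] ℝ := fderiv ℝ H (U x) with hdH
  -- the Hamilton equations applied to basis vectors
  have hdHe : ∀ β : Fin (d+1), dH (e β) = -(c β) := by
    intro β
    have h0 := hc (e β)
    have hsnoc0 : OmegaEval (d+1) k (Fin.snoc e (e β)) = 0 := by
      rw [OmegaEval_eq]
      refine Finset.sum_eq_zero fun s _ => ?_
      refine (OmegaAltS (d+1) k s).map_eq_zero_of_eq _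
        (i := Fin.castSucc β) (j := Fin.last (d+1)) ?_ (Fin.ne_of_lt (Fin.castSucc_lt_last β))
      simp [Fin.snoc_castSucc, Fin.snoc_last]
    have hsum : ∑ γ : Fin (d+1), c γ * (e β).1 (Fin.castAdd k γ) = c β := by
      have : ∀ γ : Fin (d+1), (e β).1 (Fin.castAdd k γ) = if γ = β then 1 else 0 := by
        intro γ
        rw [he]
        rw [hproj (Pi.single β 1) γ]
        simp [Pi.single_apply]
      simp only [this, mul_ite, mul_one, mul_zero]
      simp
    rw [hsnoc0, mul_zero, hsum] at h0
    linarith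
  -- Ω on the frame (ξ, W)
  have hOmCons : OmegaEval (d+1) k (Fin.cons ξ W) = D * OmegaEval (d+1) k (Fin.cons ξ e) := by
    rw [OmegaEval_eq, OmegaEval_eq, Finset.mul_sum]
    refine Finset.sum_congr rfl fun s _ => ?_
    exact OmegaAltS_cons_reduce (d+1) k s ξ (T : (Fin (d+1) → ℝ) →ₗ[ℝ] Phase (d+1) k) v
  have hOmRot : OmegaEval (d+1) k (Fin.cons ξ e)
      = (-1 : ℝ) ^ (d+1) * OmegaEval (d+1) k (Fin.snoc e ξ) := by
    rw [OmegaEval_eq, OmegaEval_eq, Finset.mul_sum]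
    refine Finset.sum_congr rfl fun s _ => ?_
    exact OmegaAltS_cons_snoc (d+1) k s ξ e
  have hcξ := hc ξ
  -- the value of the left-hand side
  have hLHS : dEval (fun m' w => a m' w) (U x) W
      = -(D * (dH ξ + ∑ β : Fin (d+1), c β * ξ.1 (Fin.castAdd k β))) := by
    rw [hdefa (U x) W, hOmCons, hOmRot, hcξ]
  rw [hLHS]
  -- now compute the right-hand side
  have hstep : ∀ i : Fin (d+2),
      fderiv ℝ (fun m' => H m' *
          volEval (d+1) k ((Fin.cons ξ W : Fin (d+2) → Phase (d+1) k) ∘ i.succAbove)) (U x)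
        ((Fin.cons ξ W : Fin (d+2) → Phase (d+1) k) i)
      = volEval (d+1) k ((Fin.cons ξ W : Fin (d+2) → Phase (d+1) k) ∘ i.succAbove) *
          dH ((Fin.cons ξ W : Fin (d+2) → Phase (d+1) k) i) := by
    intro i
    rw [fderiv_mul_const (hH.differentiable (by simp) (U x))]
    rw [ContinuousLinearMap.smul_apply, smul_eq_mul]
  have hRHS : dEval (fun m' (w : Fin (d + 1) → Phase (d + 1) k) => H m' * volEval (d + 1) k w)
        (U x) (Fin.cons ξ W)
      = ∑ i : Fin (d+2), (-1 : ℝ) ^ (i : ℕ) *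
          (volEval (d+1) k ((Fin.cons ξ W : Fin (d+2) → Phase (d+1) k) ∘ i.succAbove) *
            dH ((Fin.cons ξ W : Fin (d+2) → Phase (d+1) k) i)) := by
    rw [dEval]
    refine Finset.sum_congr rfl fun i _ => ?_
    show (-1 : ℝ) ^ (i : ℕ) * fderiv ℝ (fun m' => H m' *
        volEval (d+1) k ((Fin.cons ξ W : Fin (d+2) → Phase (d+1) k) ∘ i.succAbove)) (U x)
        ((Fin.cons ξ W : Fin (d+2) → Phase (d+1) k) i) = _
    rw [hstep i]
  rw [hRHS]
  conv_rhs => rw [Fin.sum_univ_succ]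
  -- identify the pieces
  have hwsA : (Fin.cons ξ W : Fin (d+2) → Phase (d+1) k) ∘ (Fin.succAbove 0) = W := by
    funext b
    simp [Fin.succAbove_zero]
  have hwsS : ∀ j : Fin (d+1),
      (Fin.cons ξ W : Fin (d+2) → Phase (d+1) k) ∘ (Fin.succAbove j.succ)
      = Fin.cons ξ (W ∘ Fin.succAbove j) := by
    intro j
    funext b
    refine Fin.cases ?_ (fun b' => ?_) b <;>
      simp [Fin.succ_succAbove_succ, Fin.succ_succAbove_zero]
  have hvolW : volEval (d+1) k W = D := by
    rw [volEval, hD, ← Matrix.det_transpose (Matrix.of fun j β : Fin (d+1) => v j β)]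
    congr 1
    ext a' b'
    exact hproj (v b') a'
  have hdW : ∀ j : Fin (d+1), dH (W j) = ∑ β : Fin (d+1), v j β * (-(c β)) := by
    intro j
    have hL : dH (W j) = ((dH.comp T).toLinearMap) (v j) := rfl
    rw [hL, LinearMap.pi_apply_eq_sum_univ]
    refine Finset.sum_congr rfl fun β _ => ?_
    rw [smul_eq_mul]
    congr 1
    have : (fun j' => if β = j' then (1:ℝ) else 0) = Pi.single β 1 := by
      funext j'
      simp [Pi.single_apply, eq_comm]
    rw [this]
    exact hdHe β
  set κ : Fin (d + 2) → Fin (d + 1) → ℝ :=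
    (Fin.cons (fun γ' => ξ.1 (Fin.castAdd k γ')) v : Fin (d+2) → Fin (d+1) → ℝ) with hκ
  have hBj : ∀ j : Fin (d+1),
      volEval (d+1) k (Fin.cons ξ (W ∘ Fin.succAbove j))
      = (Matrix.of fun γ b : Fin (d+1) => κ (Fin.succAbove j.succ b) γ).det := by
    intro j
    rw [volEval]
    congr 1
    ext γ b
    refine Fin.cases ?_ (fun b' => ?_) b
    · simp [hκ, Fin.succ_succAbove_zero]
    · simp only [Matrix.of_apply, Fin.cons_succ, Fin.succ_succAbove_succ, hκ]
      exact hproj (v (j.succAbove b')) γ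
  have hcram : ∀ β : Fin (d+1),
      ∑ j : Fin (d+1), (-1 : ℝ) ^ (j : ℕ) * v j β *
        (Matrix.of fun γ b : Fin (d+1) => κ (Fin.succAbove j.succ b) γ).det
      = ξ.1 (Fin.castAdd k β) * D := by
    intro β
    have := cramer_aux (fun γ' => ξ.1 (Fin.castAdd k γ')) v β
    rw [hκ]
    exact this
  simp only [Fin.cons_zero, Fin.cons_succ, hwsA, hwsS, hvolW, hdW, hBj]
  rw [Fin.val_zero, pow_zero, one_mul]
  have hsum2 : ∑ j : Fin (d+1), (-1 : ℝ) ^ ((j.succ : Fin (d+2)) : ℕ) *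
      ((Matrix.of fun γ b : Fin (d+1) => κ (Fin.succAbove j.succ b) γ).det *
        ∑ β : Fin (d+1), v j β * (-(c β)))
      = ∑ β : Fin (d+1), c β * (ξ.1 (Fin.castAdd k β) * D) := by
    have hterm : ∀ j : Fin (d+1), (-1 : ℝ) ^ ((j.succ : Fin (d+2)) : ℕ) *
        ((Matrix.of fun γ b : Fin (d+1) => κ (Fin.succAbove j.succ b) γ).det *
          ∑ β : Fin (d+1), v j β * (-(c β)))
        = ∑ β : Fin (d+1), c β * ((-1 : ℝ) ^ (j : ℕ) * v j β *
            (Matrix.of fun γ b : Fin (d+1) => κ (Fin.succAbove j.succ b) γ).det) := by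
      intro j
      rw [Finset.mul_sum, Finset.mul_sum]
      refine Finset.sum_congr rfl fun β _ => ?_
      rw [Fin.val_succ, pow_succ]
      ring
    rw [Finset.sum_congr rfl fun j _ => hterm j, Finset.sum_comm]
    refine Finset.sum_congr rfl fun β _ => ?_
    rw [← Finset.mul_sum, hcram β]
  rw [hsum2]
  have hfin : D * (dH ξ + ∑ β : Fin (d+1), c β * ξ.1 (Fin.castAdd k β))
      = D * dH ξ + ∑ β : Fin (d+1), c β * (ξ.1 (Fin.castAdd k β) * D) := by
    rw [mul_add, Finset.mul_sum]
    congr 1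
    refine Finset.sum_congr rfl fun β _ => by ring
  rw [hfin]
end
end
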